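/- arXiv:2004.02949 — 4 statements merged into one kernel-verified Lean document; each statement's English description precedes it below -/
import Mathlib

section
/- Let $X$ be a nonnegative random variable, $1 \leq p < 2$, and $\varepsilon > 1$. Then for every $n \geq 1$, $\sum_{k=1}^n \mathbb{P}\{\varepsilon X > k^{1/p}\} \leq \varepsilon^p \left(1 + \sum_{k=1}^n \mathbb{P}\{X > k^{1/p}\}\right)$. -/
open MeasureTheory

lemma count_aux (c y : ℝ) (hc : 1 ≤ c) (hy : 0 ≤ y) (n : ℕ) :
    ((((Finset.Icc 1 n).filter fun k : ℕ => (k : ℝ) < c * y).card : ℝ)) ≤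
      c * (1 + (((Finset.Icc 1 n).filter fun k : ℕ => (k : ℝ) < y).card : ℝ)) := by
  classical
  set A := ((Finset.Icc 1 n).filter fun k : ℕ => (k : ℝ) < c * y).card with hA
  set B := ((Finset.Icc 1 n).filter fun k : ℕ => (k : ℝ) < y).card with hB
  have hAn : A ≤ n := by
    calc A ≤ (Finset.Icc 1 n).card := Finset.card_filter_le _ _
    _ = n := by simp
  by_cases h : n < ⌈y⌉₊
  · -- all k in Icc satisfy k < y
    have hBn : B = n := by
      have : (Finset.Icc 1 n).filter (fun k : ℕ => (k : ℝ) < y) = Finset.Icc 1 n := by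
        apply Finset.filter_true_of_mem
        intro k hk
        have hk' : k < ⌈y⌉₊ := lt_of_le_of_lt (Finset.mem_Icc.mp hk).2 h
        exact Nat.lt_ceil.mp hk'
      rw [hB, this]; simp
    have h1 : (A : ℝ) ≤ n := by exact_mod_cast hAn
    have h2 : (1 : ℝ) + n ≤ c * (1 + B) := by
      rw [hBn]
      nlinarith [Nat.cast_nonneg (α := ℝ) n]
    linarith
  · push_neg at h
    have hAf : A ≤ ⌊c * y⌋₊ := by
      calc A ≤ (Finset.Icc 1 ⌊c * y⌋₊).card := by
              apply Finset.card_le_card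
              intro k hk
              rw [Finset.mem_filter, Finset.mem_Icc] at hk
              exact Finset.mem_Icc.mpr ⟨hk.1.1, Nat.le_floor hk.2.le⟩
        _ = ⌊c * y⌋₊ := by simp
    have h2 : (A : ℝ) ≤ c * y := by
      calc (A : ℝ) ≤ (⌊c * y⌋₊ : ℝ) := by exact_mod_cast hAf
        _ ≤ c * y := Nat.floor_le (by positivity)
    have hBf : ⌈y⌉₊ - 1 ≤ B := by
      calc ⌈y⌉₊ - 1 = (Finset.Icc 1 (⌈y⌉₊ - 1)).card := by simp
        _ ≤ B := by
            apply Finset.card_le_card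
            intro k hk
            rw [Finset.mem_Icc] at hk
            have hk2 : k < ⌈y⌉₊ := by omega
            exact Finset.mem_filter.mpr ⟨Finset.mem_Icc.mpr ⟨hk.1, by omega⟩, Nat.lt_ceil.mp hk2⟩
    have h3 : (⌈y⌉₊ : ℝ) ≤ 1 + B := by
      have : ⌈y⌉₊ ≤ 1 + B := by omega
      exact_mod_cast this
    have h4 : y ≤ (⌈y⌉₊ : ℝ) := Nat.le_ceil y
    nlinarith [Nat.cast_nonneg (α := ℝ) B]

theorem stmt1 {Ω : Type*} [MeasureSpace Ω] [IsProbabilityMeasure (volume : Measure Ω)]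
    (X : Ω → ℝ) (hX : Measurable X) (hXnn : ∀ ω, 0 ≤ X ω)
    (p : ℝ) (hp1 : 1 ≤ p) (hp2 : p < 2) (ε : ℝ) (hε : 1 < ε) (n : ℕ) (hn : 1 ≤ n) :
    ∑ k ∈ Finset.Icc 1 n, (volume {ω | ε * X ω > (k : ℝ) ^ (1 / p)}).toReal ≤
      ε ^ p * (1 + ∑ k ∈ Finset.Icc 1 n, (volume {ω | X ω > (k : ℝ) ^ (1 / p)}).toReal) := by
  classical
  have hp0 : 0 < p := lt_of_lt_of_le one_pos hp1
  have hε0 : 0 < ε := lt_trans one_pos hε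
  set c : ℝ := ε ^ p with hc
  have hc1 : 1 < c := Real.one_lt_rpow_iff_of_pos hε0 |>.mpr (Or.inl ⟨hε, hp0⟩)
  -- set definitions
  set S : ℕ → Set Ω := fun k => {ω | ε * X ω > (k : ℝ) ^ (1 / p)} with hS
  set T : ℕ → Set Ω := fun k => {ω | X ω > (k : ℝ) ^ (1 / p)} with hT
  have hSm : ∀ k, MeasurableSet (S k) := fun k =>
    measurableSet_lt measurable_const (hX.const_mul ε)
  have hTm : ∀ k, MeasurableSet (T k) := fun k =>
    measurableSet_lt measurable_const hX
  -- key iffs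
  have key : ∀ ω, ∀ k : ℕ, (ω ∈ S k ↔ (k : ℝ) < c * (X ω) ^ p) ∧
      (ω ∈ T k ↔ (k : ℝ) < (X ω) ^ p) := by
    intro ω k
    have hx := hXnn ω
    have hkpow : ((k : ℝ) ^ (1 / p)) ^ p = (k : ℝ) := by
      rw [← Real.rpow_mul (Nat.cast_nonneg k), one_div_mul_cancel hp0.ne', Real.rpow_one]
    constructor
    · constructor
      · intro hmem
        have h1 : ((k : ℝ) ^ (1 / p)) ^ p < (ε * X ω) ^ p :=
          Real.rpow_lt_rpow (by positivity) hmem hp0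
        rwa [hkpow, Real.mul_rpow hε0.le hx] at h1
      · intro hlt
        have h1 : ((k : ℝ) ^ (1 / p)) ^ p < (ε * X ω) ^ p := by
          rwa [hkpow, Real.mul_rpow hε0.le hx]
        exact (Real.rpow_lt_rpow_iff (by positivity) (by positivity) hp0).mp h1
    · constructor
      · intro hmem
        have h1 : ((k : ℝ) ^ (1 / p)) ^ p < (X ω) ^ p :=
          Real.rpow_lt_rpow (by positivity) hmem hp0
        rwa [hkpow] at h1
      · intro hlt
        have h1 : ((k : ℝ) ^ (1 / p)) ^ p < (X ω) ^ p := by rwa [hkpow]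
        exact (Real.rpow_lt_rpow_iff (by positivity) (by positivity) hp0).mp h1
  -- pointwise inequality of indicator sums
  have ptwise : ∀ ω, ∑ k ∈ Finset.Icc 1 n, (S k).indicator (1 : Ω → ℝ) ω ≤
      c * (1 + ∑ k ∈ Finset.Icc 1 n, (T k).indicator (1 : Ω → ℝ) ω) := by
    intro ω
    have hx := hXnn ω
    have hsumS : ∑ k ∈ Finset.Icc 1 n, (S k).indicator (1 : Ω → ℝ) ω =
        (((Finset.Icc 1 n).filter fun k : ℕ => (k : ℝ) < c * (X ω) ^ p).card : ℝ) := by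
      rw [← Finset.sum_boole]
      apply Finset.sum_congr rfl
      intro k _
      rw [Set.indicator_apply, Pi.one_apply]
      by_cases hmem : ω ∈ S k
      · rw [if_pos hmem, if_pos ((key ω k).1.mp hmem)]
      · rw [if_neg hmem, if_neg (fun h => hmem ((key ω k).1.mpr h))]
    have hsumT : ∑ k ∈ Finset.Icc 1 n, (T k).indicator (1 : Ω → ℝ) ω =
        (((Finset.Icc 1 n).filter fun k : ℕ => (k : ℝ) < (X ω) ^ p).card : ℝ) := by
      rw [← Finset.sum_boole]
      apply Finset.sum_congr rfl
      intro k _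
      rw [Set.indicator_apply, Pi.one_apply]
      by_cases hmem : ω ∈ T k
      · rw [if_pos hmem, if_pos ((key ω k).2.mp hmem)]
      · rw [if_neg hmem, if_neg (fun h => hmem ((key ω k).2.mpr h))]
    rw [hsumS, hsumT]
    exact count_aux c ((X ω) ^ p) hc1.le (Real.rpow_nonneg hx p) n
  -- integrate
  have hintS : ∀ k, Integrable ((S k).indicator (1 : Ω → ℝ)) (volume : Measure Ω) :=
    fun k => (integrable_const 1).indicator (hSm k)
  have hintT : ∀ k, Integrable ((T k).indicator (1 : Ω → ℝ)) (volume : Measure Ω) :=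
    fun k => (integrable_const 1).indicator (hTm k)
  have hLHS : ∑ k ∈ Finset.Icc 1 n, (volume (S k)).toReal =
      ∫ ω, ∑ k ∈ Finset.Icc 1 n, (S k).indicator (1 : Ω → ℝ) ω := by
    rw [integral_finset_sum _ (fun k _ => hintS k)]
    apply Finset.sum_congr rfl
    intro k _
    rw [integral_indicator_one (hSm k), Measure.real]
  have hRHS : ∫ ω, c * (1 + ∑ k ∈ Finset.Icc 1 n, (T k).indicator (1 : Ω → ℝ) ω) =
      c * (1 + ∑ k ∈ Finset.Icc 1 n, (volume (T k)).toReal) := by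
    rw [integral_const_mul]
    congr 1
    rw [integral_add (integrable_const 1) (integrable_finset_sum _ (fun k _ => hintT k))]
    congr 1
    · simp
    · rw [integral_finset_sum _ (fun k _ => hintT k)]
      apply Finset.sum_congr rfl
      intro k _
      rw [integral_indicator_one (hTm k), Measure.real]
  rw [hLHS, ← hRHS]
  apply integral_mono (integrable_finset_sum _ (fun k _ => hintS k))
    (((integrable_const 1).add (integrable_finset_sum _ (fun k _ => hintT k))).const_mul c)
  exact ptwise
end

section
/- Let $X_k, X_j$ be random variables with the same marginal distribution as a random variable $X_1$, and let $\Delta_{k,j}(x,y) := \mathbb{P}\{X_k > x, X_j > y\} - \mathbb{P}\{X_k > x\}\mathbb{P}\{X_j > y\}$. Then for all $u, v > 0$ and $\varepsilon > 1$: $\mathbb{P}\{X_k > u, X_j > v\} \leq \left(\frac{\varepsilon}{\varepsilon-1}\right)^2 \frac{1}{uv} \int_{v/\varepsilon}^{v}\int_{u/\varepsilon}^{u} \Delta_{k,j}(x,y)\, dx\, dy + \mathbb{P}\{X_1 > u/\varepsilon\}\,\mathbb{P}\{X_1 > v/\varepsilon\}$. -/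
open MeasureTheory

theorem stmt4 {Ω : Type*} [MeasureSpace Ω] [IsProbabilityMeasure (volume : Measure Ω)]
    (X1 Xk Xj : Ω → ℝ) (hX1 : Measurable X1) (hXk : Measurable Xk) (hXj : Measurable Xj)
    (hk : Measure.map Xk volume = Measure.map X1 volume)
    (hj : Measure.map Xj volume = Measure.map X1 volume)
    (u v : ℝ) (hu : 0 < u) (hv : 0 < v) (ε : ℝ) (hε : 1 < ε) :
    (volume {ω | Xk ω > u ∧ Xj ω > v}).toReal ≤
      (ε / (ε - 1)) ^ 2 * (1 / (u * v)) *
        (∫ y in v / ε..v, ∫ x in u / ε..u,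
          ((volume {ω | Xk ω > x ∧ Xj ω > y}).toReal -
            (volume {ω | Xk ω > x}).toReal * (volume {ω | Xj ω > y}).toReal)) +
      (volume {ω | X1 ω > u / ε}).toReal * (volume {ω | X1 ω > v / ε}).toReal := by
  have hε0 : (0:ℝ) < ε := lt_trans one_pos hε
  have hε1 : (0:ℝ) < ε - 1 := by linarith
  -- abbreviations
  set f : ℝ → ℝ → ℝ := fun x y => (volume {ω | Xk ω > x ∧ Xj ω > y}).toReal with hfdef
  set g : ℝ → ℝ := fun x => (volume {ω | Xk ω > x}).toReal with hgdef
  set h : ℝ → ℝ := fun y => (volume {ω | Xj ω > y}).toReal with hhdef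
  -- generic monotonicity of measures in toReal
  have mono : ∀ s t : Set Ω, s ⊆ t → (volume s).toReal ≤ (volume t).toReal := fun s t hst =>
    ENNReal.toReal_mono (measure_ne_top _ _) (measure_mono hst)
  have hfx : ∀ y, Antitone fun x => f x y := by
    intro y a b hab
    exact mono _ _ fun ω hω => ⟨lt_of_le_of_lt hab hω.1, hω.2⟩
  have hfy : ∀ x, Antitone fun y => f x y := by
    intro x a b hab
    exact mono _ _ fun ω hω => ⟨hω.1, lt_of_le_of_lt hab hω.2⟩
  have hga : Antitone g := fun a b hab => mono _ _ fun ω hω => lt_of_le_of_lt hab hω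
  have hha : Antitone h := fun a b hab => mono _ _ fun ω hω => lt_of_le_of_lt hab hω
  have hg0 : ∀ x, 0 ≤ g x := fun x => ENNReal.toReal_nonneg
  have hh0 : ∀ y, 0 ≤ h y := fun y => ENNReal.toReal_nonneg
  -- identify marginals with X1
  have hgk : ∀ t : ℝ, volume {ω | Xk ω > t} = volume {ω | X1 ω > t} := by
    intro t
    have h1 : Measure.map Xk volume (Set.Ioi t) = Measure.map X1 volume (Set.Ioi t) := by
      rw [hk]
    rwa [Measure.map_apply hXk measurableSet_Ioi,
      Measure.map_apply hX1 measurableSet_Ioi] at h1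
  have hhj : ∀ t : ℝ, volume {ω | Xj ω > t} = volume {ω | X1 ω > t} := by
    intro t
    have h1 : Measure.map Xj volume (Set.Ioi t) = Measure.map X1 volume (Set.Ioi t) := by
      rw [hj]
    rwa [Measure.map_apply hXj measurableSet_Ioi,
      Measure.map_apply hX1 measurableSet_Ioi] at h1
  set A : ℝ := (volume {ω | X1 ω > u / ε}).toReal with hAdef
  set B : ℝ := (volume {ω | X1 ω > v / ε}).toReal with hBdef
  have hgA : g (u / ε) = A := by simp [hgdef, hAdef, hgk]
  have hhB : h (v / ε) = B := by simp [hhdef, hBdef, hhj]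
  have huε : u / ε ≤ u := by
    rw [div_le_iff₀ hε0]; nlinarith
  have hvε : v / ε ≤ v := by
    rw [div_le_iff₀ hε0]; nlinarith
  set c : ℝ := f u v - A * B with hcdef
  -- pointwise lower bound on the integrand
  have hpt : ∀ y ∈ Set.Icc (v / ε) v, ∀ x ∈ Set.Icc (u / ε) u,
      c ≤ f x y - g x * h y := by
    intro y hy x hx
    have h1 : f u v ≤ f x y := le_trans (hfx v hx.2) (hfy x hy.2)
    have h2 : g x * h y ≤ A * B := by
      rw [← hgA, ← hhB]
      exact mul_le_mul (hga hx.1) (hha hy.1) (hh0 y) (hg0 _)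
    rw [hcdef]; linarith
  -- integrability in x
  have hInx : ∀ y, IntervalIntegrable (fun x => f x y - g x * h y) volume (u / ε) u := by
    intro y
    exact ((hfx y).intervalIntegrable).sub
      ((hga.intervalIntegrable).mul_const (h y))
  -- inner integral lower bound
  have hinner : ∀ y ∈ Set.Icc (v / ε) v,
      (u - u / ε) * c ≤ ∫ x in u / ε..u, (f x y - g x * h y) := by
    intro y hy
    have h0 := intervalIntegral.integral_mono_on huε intervalIntegrable_const (hInx y)
      (hpt y hy)
    rwa [intervalIntegral.integral_const, smul_eq_mul] at h0
  -- the outer integrand as an explicit function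
  set C : ℝ := ∫ x in u / ε..u, g x with hCdef
  have hC0 : 0 ≤ C := intervalIntegral.integral_nonneg huε fun x _ => hg0 x
  set F : ℝ → ℝ := fun y => ∫ x in u / ε..u, f x y with hFdef
  have hIeq : ∀ y, (∫ x in u / ε..u, (f x y - g x * h y)) = F y - C * h y := by
    intro y
    rw [intervalIntegral.integral_sub ((hfx y).intervalIntegrable)
      ((hga.intervalIntegrable).mul_const (h y)),
      intervalIntegral.integral_mul_const]
  have hFa : Antitone F := by
    intro a b hab
    exact intervalIntegral.integral_mono huε ((hfx b).intervalIntegrable)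
      ((hfx a).intervalIntegrable) fun x => hfy x hab
  have hChA : Antitone fun y => C * h y := fun a b hab =>
    mul_le_mul_of_nonneg_left (hha hab) hC0
  have hInty : IntervalIntegrable (fun y => ∫ x in u / ε..u, (f x y - g x * h y))
      volume (v / ε) v := by
    have : IntervalIntegrable (fun y => F y - C * h y) volume (v / ε) v :=
      (hFa.intervalIntegrable).sub (hChA.intervalIntegrable)
    exact this.congr (fun y _ => (hIeq y).symm)
  -- outer integral lower bound
  have houter : (v - v / ε) * ((u - u / ε) * c) ≤
      ∫ y in v / ε..v, ∫ x in u / ε..u, (f x y - g x * h y) := by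
    have h0 := intervalIntegral.integral_mono_on hvε intervalIntegrable_const hInty hinner
    rwa [intervalIntegral.integral_const, smul_eq_mul] at h0
  -- final arithmetic
  have hu0 : u ≠ 0 := ne_of_gt hu
  have hv0 : v ≠ 0 := ne_of_gt hv
  have hε0' : ε ≠ 0 := ne_of_gt hε0
  have hε1' : ε - 1 ≠ 0 := ne_of_gt hε1
  have hco : (0:ℝ) < (ε / (ε - 1)) ^ 2 * (1 / (u * v)) := by positivity
  have hmul : (ε / (ε - 1)) ^ 2 * (1 / (u * v)) * ((v - v / ε) * ((u - u / ε) * c)) = c := by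
    field_simp
  have hfin := mul_le_mul_of_nonneg_left houter hco.le
  rw [hmul] at hfin
  have : c + A * B ≤ (ε / (ε - 1)) ^ 2 * (1 / (u * v)) *
      (∫ y in v / ε..v, ∫ x in u / ε..u, (f x y - g x * h y)) + A * B := by linarith
  simpa [hcdef] using this
end

section
/- Let $1 \leq p < 2$ and $\{X_n\}$ be identically distributed pairwise positively quadrant dependent random variables. If $\sum_{k=1}^n (X_k - c)/n^{1/p} \to 0$ almost surely for some finite constant $c$, and $\sum_{1 \leq k < j < \infty} (kj)^{-1/p} G_{X_k, X_j}(k^{1/p}, j^{1/p}) < \infty$, then $\sum_{k=1}^\infty \mathbb{P}\{|X_1| > k^{1/p}\} < \infty$. -/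
open MeasureTheory Filter Topology

set_option linter.unreachableTactic false
set_option linter.unusedTactic false
set_option maxHeartbeats 1000000

namespace Stmt8Aux
open Set

/-- bump derivative: +4/u on (u/2, 3u/4], -4/u on (-(3u/4), -(u/2)] -/
noncomputable def phi (u : ℝ) : ℝ → ℝ := fun x =>
  4/u * ((Set.Ioc (u/2) (3*u/4)).indicator (fun _ => (1:ℝ)) x
       - (Set.Ioc (-(3*u/4)) (-(u/2))).indicator (fun _ => (1:ℝ)) x)

/-- the piecewise linear function: 1 + ∫_{-∞}^s phi -/
noncomputable def Ffn (u : ℝ) : ℝ → ℝ := fun s =>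
  1 + 4/u * ((min s (3*u/4) - min s (u/2)) - (min s (-(u/2)) - min s (-(3*u/4))))

variable {u s : ℝ}

lemma aux1 (hu : 0 < u) {e : ℝ} (h : 0 ≤ u + 4*e) : 0 ≤ 1 + 4/u*e := by
  have h2 : 0 ≤ (u + 4*e)/u := div_nonneg h hu.le
  rw [add_div, div_self hu.ne'] at h2
  rw [div_mul_eq_mul_div]
  exact h2

lemma aux2 (hu : 0 < u) {e : ℝ} (h : e ≤ 0) : 4/u*e ≤ 0 :=
  mul_nonpos_iff.mpr (Or.inl ⟨by positivity, h⟩)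

lemma Ffn_nonneg (hu : 0 < u) (s : ℝ) : 0 ≤ Ffn u s := by
  have h4 : (0:ℝ) < 4/u := by positivity
  unfold Ffn
  rcases le_total s (3*u/4) with h1 | h1 <;> rcases le_total s (u/2) with h2 | h2 <;>
    rcases le_total s (-(u/2)) with h3 | h3 <;> rcases le_total s (-(3*u/4)) with h4' | h4' <;>
    simp [min_eq_left, min_eq_right, h1, h2, h3, h4'] <;>
    · apply aux1 hu
      nlinarith [hu]

lemma Ffn_le_one (hu : 0 < u) (s : ℝ) : Ffn u s ≤ 1 := by
  have h4 : (0:ℝ) < 4/u := by positivity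
  unfold Ffn
  rcases le_total s (3*u/4) with h1 | h1 <;> rcases le_total s (u/2) with h2 | h2 <;>
    rcases le_total s (-(u/2)) with h3 | h3 <;> rcases le_total s (-(3*u/4)) with h4' | h4' <;>
    simp [min_eq_left, min_eq_right, h1, h2, h3, h4'] <;>
    · apply aux2 hu
      nlinarith [hu]

lemma Ffn_eq_one (hu : 0 < u) (h : 3*u/4 ≤ |s|) : Ffn u s = 1 := by
  unfold Ffn
  rcases abs_le'.mp (le_refl |s|) with ⟨-, -⟩
  rcases le_or_gt 0 s with hs | hs
  · have h1 : 3*u/4 ≤ s := by rcases abs_cases s with ⟨he,-⟩|⟨he,-⟩ <;> linarith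
    have h2 : u/2 ≤ s := by linarith
    have h3 : -(u/2) ≤ s := by linarith
    have h4' : -(3*u/4) ≤ s := by linarith
    rw [min_eq_right h1, min_eq_right h2, min_eq_right h3, min_eq_right h4']
    ring
  · have h1 : s ≤ -(3*u/4) := by rcases abs_cases s with ⟨he,-⟩|⟨he,-⟩ <;> linarith
    have h2 : s ≤ -(u/2) := by linarith
    have h3 : s ≤ u/2 := by linarith
    have h4' : s ≤ 3*u/4 := by linarith
    rw [min_eq_left h4', min_eq_left h3, min_eq_left h2, min_eq_left h1]
    ring

lemma Ffn_eq_zero (hu : 0 < u) (h : |s| ≤ u/2) : Ffn u s = 0 := by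
  unfold Ffn
  rcases abs_le.mp h with ⟨hl, hr⟩
  have h1 : s ≤ 3*u/4 := by linarith
  have h4' : -(3*u/4) ≤ s := by linarith
  rw [min_eq_left h1, min_eq_left hr, min_eq_right hl, min_eq_right h4']
  field_simp
  ring



lemma Ffn_continuous (u : ℝ) : Continuous (Ffn u) := by
  unfold Ffn; fun_prop

lemma phi_meas (u : ℝ) : Measurable (phi u) := by
  unfold phi
  exact (((measurable_const.indicator measurableSet_Ioc).sub
    (measurable_const.indicator measurableSet_Ioc)).const_mul _)

lemma phi_integrable (u : ℝ) : Integrable (phi u) := by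
  unfold phi
  refine Integrable.const_mul (Integrable.sub ?_ ?_) _ <;>
  · rw [integrable_indicator_iff measurableSet_Ioc]
    exact (integrableOn_const_iff).mpr (Or.inr measure_Ioc_lt_top)

lemma phi_abs_le (hu : 0 < u) (x : ℝ) :
    |phi u x| ≤ (4/u) * (Set.Ioc (-u) u).indicator (fun _ => (1:ℝ)) x := by
  by_cases hx : x ∈ Set.Ioc (-u) u
  · rw [Set.indicator_of_mem hx]
    unfold phi
    rw [abs_mul, abs_of_pos (by positivity : (0:ℝ) < 4/u)]
    have h : |(Set.Ioc (u/2) (3*u/4)).indicator (fun _ => (1:ℝ)) x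
        - (Set.Ioc (-(3*u/4)) (-(u/2))).indicator (fun _ => (1:ℝ)) x| ≤ 1 := by
      rw [Set.indicator_apply, Set.indicator_apply]
      split_ifs with h1 h2 h2
      · exfalso; rcases h1 with ⟨h1a, -⟩; rcases h2 with ⟨-, h2b⟩; linarith
      · simp
      · simp
      · simp
    calc 4/u * |_ - _| ≤ 4/u * 1 := by
          exact mul_le_mul_of_nonneg_left h (by positivity)
      _ = 4/u * 1 := rfl
  · rw [Set.indicator_of_notMem hx]
    have h1 : x ∉ Set.Ioc (u/2) (3*u/4) := by
      intro hm; exact hx ⟨by cases hm with | intro a b => linarith, by cases hm with | intro a b => linarith⟩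
    have h2 : x ∉ Set.Ioc (-(3*u/4)) (-(u/2)) := by
      intro hm; exact hx ⟨by cases hm with | intro a b => linarith, by cases hm with | intro a b => linarith⟩
    unfold phi
    rw [Set.indicator_of_notMem h1, Set.indicator_of_notMem h2]
    simp

lemma integral_Iio_indicator (a b s : ℝ) (hab : a ≤ b) :
    ∫ x in Set.Iio s, (Set.Ioc a b).indicator (fun _ => (1:ℝ)) x = min s b - min s a := by
  rw [setIntegral_indicator measurableSet_Ioc, setIntegral_const]
  rcases le_or_gt s a with h1 | h1
  · have : Set.Iio s ∩ Set.Ioc a b = ∅ := by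
      ext x; simp only [Set.mem_inter_iff, Set.mem_Iio, Set.mem_Ioc, Set.mem_empty_iff_false,
        iff_false, not_and, and_imp]
      intro hxs hax hxb; linarith
    rw [this]
    rw [min_eq_left (le_trans h1 hab), min_eq_left h1]
    simp
  · rcases le_or_gt s b with h2 | h2
    · have : Set.Iio s ∩ Set.Ioc a b = Set.Ioo a s := by
        ext x; simp only [Set.mem_inter_iff, Set.mem_Iio, Set.mem_Ioc, Set.mem_Ioo]
        constructor
        · rintro ⟨hxs, hax, hxb⟩; exact ⟨hax, hxs⟩
        · rintro ⟨hax, hxs⟩; exact ⟨hxs, hax, le_trans (le_of_lt hxs) h2⟩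
      rw [this, measureReal_def, Real.volume_Ioo, ENNReal.toReal_ofReal (by linarith)]
      rw [min_eq_left h2, min_eq_right (le_of_lt h1)]
      simp
    · have : Set.Iio s ∩ Set.Ioc a b = Set.Ioc a b := by
        ext x; simp only [Set.mem_inter_iff, Set.mem_Iio, Set.mem_Ioc]
        constructor
        · rintro ⟨-, h⟩; exact h
        · rintro ⟨hax, hxb⟩; exact ⟨lt_of_le_of_lt hxb h2, hax, hxb⟩
      rw [this, measureReal_def, Real.volume_Ioc, ENNReal.toReal_ofReal (by linarith)]
      rw [min_eq_right (le_of_lt h2), min_eq_right (le_of_lt (lt_of_le_of_lt hab h2))]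
      simp

lemma integral_Iio_phi (hu : 0 < u) (s : ℝ) :
    ∫ x in Set.Iio s, phi u x = Ffn u s - 1 := by
  unfold phi
  rw [MeasureTheory.integral_const_mul, integral_sub
    ((integrable_indicator_iff measurableSet_Ioc).mpr
      ((integrableOn_const_iff).mpr (Or.inr measure_Ioc_lt_top))).restrict
    ((integrable_indicator_iff measurableSet_Ioc).mpr
      ((integrableOn_const_iff).mpr (Or.inr measure_Ioc_lt_top))).restrict]
  rw [integral_Iio_indicator _ _ s (by linarith), integral_Iio_indicator _ _ s (by linarith)]
  unfold Ffn
  ring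


section

variable {Ω : Type*} [MeasurableSpace Ω] (μ : Measure Ω) [IsProbabilityMeasure μ]
variable (Y Z : Ω → ℝ)

noncomputable def Hfun : ℝ → ℝ → ℝ := fun x y =>
  (μ {ω | x < Y ω ∧ y < Z ω}).toReal - (μ {ω | x < Y ω}).toReal * (μ {ω | y < Z ω}).toReal

variable {Y Z}

lemma toReal_prob_le_one' (S : Set Ω) : (μ S).toReal ≤ 1 := by
  have h := measure_mono (Set.subset_univ S) (μ := μ)
  rw [measure_univ] at h
  simpa using ENNReal.toReal_mono (by simp) h

lemma Hfun_abs_le_one (x y : ℝ) : |Hfun μ Y Z x y| ≤ 1 := by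
  unfold Hfun
  rw [abs_le]
  have h1 := toReal_prob_le_one' μ {ω | x < Y ω ∧ y < Z ω}
  have h2 := toReal_prob_le_one' μ {ω | x < Y ω}
  have h3 := toReal_prob_le_one' μ {ω | y < Z ω}
  have n1 : (0:ℝ) ≤ (μ {ω | x < Y ω ∧ y < Z ω}).toReal := ENNReal.toReal_nonneg
  have n2 : (0:ℝ) ≤ (μ {ω | x < Y ω}).toReal := ENNReal.toReal_nonneg
  have n3 : (0:ℝ) ≤ (μ {ω | y < Z ω}).toReal := ENNReal.toReal_nonneg
  constructor <;> nlinarith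

lemma meas_joint (hY : Measurable Y) (hZ : Measurable Z) :
    Measurable (fun q : ℝ × ℝ => (μ {ω | q.1 < Y ω ∧ q.2 < Z ω}).toReal) := by
  have hT : MeasurableSet {z : (ℝ × ℝ) × Ω | z.1.1 < Y z.2 ∧ z.1.2 < Z z.2} := by
    refine MeasurableSet.inter ?_ ?_
    · exact measurableSet_lt (measurable_fst.comp measurable_fst) (hY.comp measurable_snd)
    · exact measurableSet_lt (measurable_snd.comp measurable_fst) (hZ.comp measurable_snd)
  exact (measurable_measure_prodMk_left hT).ennreal_toReal

lemma meas_tail (hY : Measurable Y) :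
    Measurable (fun x : ℝ => (μ {ω | x < Y ω}).toReal) := by
  have hT : MeasurableSet {z : ℝ × Ω | z.1 < Y z.2} :=
    measurableSet_lt measurable_fst (hY.comp measurable_snd)
  exact (measurable_measure_prodMk_left hT).ennreal_toReal

lemma Hfun_meas (hY : Measurable Y) (hZ : Measurable Z) :
    Measurable (fun q : ℝ × ℝ => Hfun μ Y Z q.1 q.2) := by
  unfold Hfun
  exact (meas_joint μ hY hZ).sub (((meas_tail μ hY).comp measurable_fst).mul
    ((meas_tail μ hZ).comp measurable_snd))

lemma cov_integral_le_G (hY : Measurable Y) (hZ : Measurable Z) {u v : ℝ}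
    (hu : 0 < u) (hv : 0 < v) (hH : ∀ x y, 0 ≤ Hfun μ Y Z x y) :
    ∫ q : ℝ × ℝ, phi u q.1 * phi v q.2 * Hfun μ Y Z q.1 q.2 ∂(volume.prod volume)
      ≤ 16/(u*v) * ∫ y in (-v)..v, ∫ x in (-u)..u, Hfun μ Y Z x y := by
  haveI hfin1 : IsFiniteMeasure (volume.restrict (Set.Ioc (-u) u)) :=
    ⟨by rw [Measure.restrict_apply_univ]; exact measure_Ioc_lt_top⟩
  haveI hfin2 : IsFiniteMeasure (volume.restrict (Set.Ioc (-v) v)) :=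
    ⟨by rw [Measure.restrict_apply_univ]; exact measure_Ioc_lt_top⟩
  set rect : Set (ℝ × ℝ) := (Set.Ioc (-u) u) ×ˢ (Set.Ioc (-v) v) with hrectdef
  have hrectm : MeasurableSet rect := measurableSet_Ioc.prod measurableSet_Ioc
  have hHm := Hfun_meas μ hY hZ
  -- integrability of both sides
  have hdom : Integrable (fun q : ℝ × ℝ => |phi u q.1| * |phi v q.2|) (volume.prod volume) :=
    (phi_integrable u).abs.mul_prod (phi_integrable v).abs
  have hLint : Integrable (fun q : ℝ × ℝ => phi u q.1 * phi v q.2 * Hfun μ Y Z q.1 q.2)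
      (volume.prod volume) := by
    refine hdom.mono' ?_ (Eventually.of_forall fun q => ?_)
    · exact ((((phi_meas u).comp measurable_fst).mul
        ((phi_meas v).comp measurable_snd)).mul hHm).aestronglyMeasurable
    · rw [Real.norm_eq_abs, abs_mul, abs_mul]
      calc |phi u q.1| * |phi v q.2| * |Hfun μ Y Z q.1 q.2|
          ≤ |phi u q.1| * |phi v q.2| * 1 :=
            mul_le_mul_of_nonneg_left (Hfun_abs_le_one μ q.1 q.2) (by positivity)
        _ = |phi u q.1| * |phi v q.2| := by ring
  have hindint : Integrable (rect.indicator (fun _ => (1:ℝ))) (volume.prod volume) := by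
    rw [integrable_indicator_iff hrectm]
    refine (integrableOn_const_iff).mpr (Or.inr ?_)
    rw [hrectdef, Measure.prod_prod]
    exact ENNReal.mul_lt_top measure_Ioc_lt_top measure_Ioc_lt_top
  have hRint0 : Integrable (fun q : ℝ × ℝ =>
      rect.indicator (fun _ => (1:ℝ)) q * Hfun μ Y Z q.1 q.2) (volume.prod volume) := by
    refine hindint.mono' ((measurable_const.indicator hrectm).mul hHm).aestronglyMeasurable
      (Eventually.of_forall fun q => ?_)
    rw [Real.norm_eq_abs, abs_mul]
    by_cases hq : q ∈ rect
    · rw [Set.indicator_of_mem hq]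
      rw [abs_one, one_mul]
      exact Hfun_abs_le_one μ q.1 q.2
    · rw [Set.indicator_of_notMem hq]
      simp
  have hRint : Integrable (fun q : ℝ × ℝ =>
      16/(u*v) * (rect.indicator (fun _ => (1:ℝ)) q * Hfun μ Y Z q.1 q.2))
      (volume.prod volume) := hRint0.const_mul _
  -- pointwise comparison
  have hmono : ∀ q : ℝ × ℝ, phi u q.1 * phi v q.2 * Hfun μ Y Z q.1 q.2
      ≤ 16/(u*v) * (rect.indicator (fun _ => (1:ℝ)) q * Hfun μ Y Z q.1 q.2) := by
    intro q
    by_cases hq : q ∈ rect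
    · rw [Set.indicator_of_mem hq]
      rcases hq with ⟨hq1, hq2⟩
      have b1 : |phi u q.1| ≤ 4/u := by
        have := phi_abs_le hu q.1
        rwa [Set.indicator_of_mem hq1, mul_one] at this
      have b2 : |phi v q.2| ≤ 4/v := by
        have := phi_abs_le hv q.2
        rwa [Set.indicator_of_mem hq2, mul_one] at this
      have hH0 := hH q.1 q.2
      calc phi u q.1 * phi v q.2 * Hfun μ Y Z q.1 q.2
          ≤ |phi u q.1 * phi v q.2| * Hfun μ Y Z q.1 q.2 :=
            mul_le_mul_of_nonneg_right (le_abs_self _) hH0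
        _ = |phi u q.1| * |phi v q.2| * Hfun μ Y Z q.1 q.2 := by rw [abs_mul]
        _ ≤ (4/u) * (4/v) * Hfun μ Y Z q.1 q.2 := by
            refine mul_le_mul_of_nonneg_right ?_ hH0
            exact mul_le_mul b1 b2 (abs_nonneg _) (by positivity)
        _ = 16/(u*v) * (1 * Hfun μ Y Z q.1 q.2) := by
            rw [one_mul, div_mul_div_comm]
            norm_num
    · rw [Set.indicator_of_notMem hq]
      have hq' : q.1 ∉ Set.Ioc (-u) u ∨ q.2 ∉ Set.Ioc (-v) v := by
        by_contra hcon
        push_neg at hcon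
        exact hq ⟨hcon.1, hcon.2⟩
      have hzero : phi u q.1 = 0 ∨ phi v q.2 = 0 := by
        rcases hq' with h | h
        · left
          have := phi_abs_le hu q.1
          rw [Set.indicator_of_notMem h, mul_zero] at this
          exact abs_eq_zero.mp (le_antisymm this (abs_nonneg _))
        · right
          have := phi_abs_le hv q.2
          rw [Set.indicator_of_notMem h, mul_zero] at this
          exact abs_eq_zero.mp (le_antisymm this (abs_nonneg _))
      rcases hzero with h | h <;> rw [h] <;> simp
  have step1 : ∫ q : ℝ × ℝ, phi u q.1 * phi v q.2 * Hfun μ Y Z q.1 q.2 ∂(volume.prod volume)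
      ≤ ∫ q : ℝ × ℝ, 16/(u*v) * (rect.indicator (fun _ => (1:ℝ)) q * Hfun μ Y Z q.1 q.2)
        ∂(volume.prod volume) :=
    integral_mono hLint hRint hmono
  -- compute the RHS
  have hindmul : (fun q : ℝ × ℝ => rect.indicator (fun _ => (1:ℝ)) q * Hfun μ Y Z q.1 q.2)
      = rect.indicator (fun q => Hfun μ Y Z q.1 q.2) := by
    funext q
    by_cases hq : q ∈ rect
    · rw [Set.indicator_of_mem hq, Set.indicator_of_mem hq, one_mul]
    · rw [Set.indicator_of_notMem hq, Set.indicator_of_notMem hq, zero_mul]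
  have hfinint : Integrable (fun q : ℝ × ℝ => Hfun μ Y Z q.1 q.2)
      ((volume.restrict (Set.Ioc (-u) u)).prod (volume.restrict (Set.Ioc (-v) v))) := by
    refine (integrable_const (1:ℝ)).mono' hHm.aestronglyMeasurable
      (Eventually.of_forall fun q => ?_)
    rw [Real.norm_eq_abs]
    exact Hfun_abs_le_one μ q.1 q.2
  have step2 : ∫ q : ℝ × ℝ, 16/(u*v) * (rect.indicator (fun _ => (1:ℝ)) q * Hfun μ Y Z q.1 q.2)
        ∂(volume.prod volume)
      = 16/(u*v) * ∫ y in (-v)..v, ∫ x in (-u)..u, Hfun μ Y Z x y := by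
    rw [MeasureTheory.integral_const_mul, hindmul, integral_indicator hrectm]
    congr 1
    rw [hrectdef, ← Measure.prod_restrict]
    rw [integral_prod_symm _ hfinint]
    rw [intervalIntegral.integral_of_le (by linarith : -v ≤ v)]
    refine integral_congr_ae (Eventually.of_forall fun y => ?_)
    show (∫ x in Set.Ioc (-u) u, Hfun μ Y Z x y) = ∫ x in (-u)..u, Hfun μ Y Z x y
    rw [intervalIntegral.integral_of_le (by linarith : -u ≤ u)]
  linarith [step1, step2.le, step2.ge]


end
section

variable {Ω : Type*} [MeasurableSpace Ω] (μ : Measure Ω) [IsProbabilityMeasure μ]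
variable {Y Z : Ω → ℝ}

lemma toReal_prob_le_one (S : Set Ω) : (μ S).toReal ≤ 1 := by
  have h := measure_mono (Set.subset_univ S) (μ := μ)
  rw [measure_univ] at h
  simpa using ENNReal.toReal_mono (by simp) h

/-- Hoeffding-type covariance identity for the piecewise linear functions `Ffn`. -/
lemma hoeffding (hY : Measurable Y) (hZ : Measurable Z) {u v : ℝ} (hu : 0 < u) (hv : 0 < v) :
    (∫ ω, Ffn u (Y ω) * Ffn v (Z ω) ∂μ) -
      (∫ ω, Ffn u (Y ω) ∂μ) * (∫ ω, Ffn v (Z ω) ∂μ) =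
    ∫ q : ℝ × ℝ, phi u q.1 * phi v q.2 *
      ((μ {ω | q.1 < Y ω ∧ q.2 < Z ω}).toReal -
        (μ {ω | q.1 < Y ω}).toReal * (μ {ω | q.2 < Z ω}).toReal)
      ∂(volume.prod volume) := by
  have hFu : Measurable (fun ω => Ffn u (Y ω)) := (Ffn_continuous u).measurable.comp hY
  have hFv : Measurable (fun ω => Ffn v (Z ω)) := (Ffn_continuous v).measurable.comp hZ
  set g1 : Ω → ℝ := fun ω => Ffn u (Y ω) - 1 with hg1def
  set g2 : Ω → ℝ := fun ω => Ffn v (Z ω) - 1 with hg2def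
  have hg1m : Measurable g1 := hFu.sub measurable_const
  have hg2m : Measurable g2 := hFv.sub measurable_const
  have hg1b : ∀ ω, ‖g1 ω‖ ≤ 1 := by
    intro ω
    rw [Real.norm_eq_abs, abs_le]
    constructor
    · have := Ffn_nonneg hu (Y ω); simp only [hg1def]; linarith
    · have := Ffn_le_one hu (Y ω); simp only [hg1def]; linarith
  have hg2b : ∀ ω, ‖g2 ω‖ ≤ 1 := by
    intro ω
    rw [Real.norm_eq_abs, abs_le]
    constructor
    · have := Ffn_nonneg hv (Z ω); simp only [hg2def]; linarith
    · have := Ffn_le_one hv (Z ω); simp only [hg2def]; linarith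
  have hg1i : Integrable g1 μ :=
    (integrable_const (1:ℝ)).mono' hg1m.aestronglyMeasurable (Eventually.of_forall hg1b)
  have hg2i : Integrable g2 μ :=
    (integrable_const (1:ℝ)).mono' hg2m.aestronglyMeasurable (Eventually.of_forall hg2b)
  have hg12i : Integrable (fun ω => g1 ω * g2 ω) μ := by
    refine (integrable_const (1:ℝ)).mono' (hg1m.mul hg2m).aestronglyMeasurable
      (Eventually.of_forall fun ω => ?_)
    rw [norm_mul]
    calc ‖g1 ω‖ * ‖g2 ω‖ ≤ 1 * 1 :=
          mul_le_mul (hg1b ω) (hg2b ω) (norm_nonneg _) zero_le_one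
      _ = 1 := by ring
  -- Step 1: reduce covariance of Ffn's to covariance of g's
  have hred : (∫ ω, Ffn u (Y ω) * Ffn v (Z ω) ∂μ) -
      (∫ ω, Ffn u (Y ω) ∂μ) * (∫ ω, Ffn v (Z ω) ∂μ) =
      (∫ ω, g1 ω * g2 ω ∂μ) - (∫ ω, g1 ω ∂μ) * (∫ ω, g2 ω ∂μ) := by
    have e1 : ∀ ω, Ffn u (Y ω) * Ffn v (Z ω) = g1 ω * g2 ω + g1 ω + g2 ω + 1 := by
      intro ω; simp only [hg1def, hg2def]; ring
    have e2 : (∫ ω, Ffn u (Y ω) * Ffn v (Z ω) ∂μ)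
        = (∫ ω, g1 ω * g2 ω ∂μ) + (∫ ω, g1 ω ∂μ) + (∫ ω, g2 ω ∂μ) + 1 := by
      rw [show (fun ω => Ffn u (Y ω) * Ffn v (Z ω)) = fun ω => g1 ω * g2 ω + g1 ω + g2 ω + 1
        from funext e1]
      have I2 : Integrable (fun ω => g1 ω * g2 ω + g1 ω) μ := hg12i.add hg1i
      have I3 : Integrable (fun ω => g1 ω * g2 ω + g1 ω + g2 ω) μ := I2.add hg2i
      rw [integral_add I3 (integrable_const 1), integral_add I2 hg2i, integral_add hg12i hg1i]
      simp
    have e3 : (∫ ω, Ffn u (Y ω) ∂μ) = (∫ ω, g1 ω ∂μ) + 1 := by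
      rw [show (fun ω => Ffn u (Y ω)) = fun ω => g1 ω + 1 from funext fun ω => by
        simp only [hg1def]; ring]
      rw [integral_add hg1i (integrable_const 1)]
      simp
    have e4 : (∫ ω, Ffn v (Z ω) ∂μ) = (∫ ω, g2 ω ∂μ) + 1 := by
      rw [show (fun ω => Ffn v (Z ω)) = fun ω => g2 ω + 1 from funext fun ω => by
        simp only [hg2def]; ring]
      rw [integral_add hg2i (integrable_const 1)]
      simp
    rw [e2, e3, e4]; ring
  rw [hred]
  -- the joint set in the product space
  set S : Set (Ω × (ℝ × ℝ)) := {z | z.2.1 < Y z.1 ∧ z.2.2 < Z z.1} with hSdef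
  have hSm : MeasurableSet S := by
    refine MeasurableSet.inter ?_ ?_
    · exact measurableSet_lt (measurable_fst.comp measurable_snd) (hY.comp measurable_fst)
    · exact measurableSet_lt (measurable_snd.comp measurable_snd) (hZ.comp measurable_fst)
  set f : Ω → ℝ × ℝ → ℝ := fun ω q =>
    phi u q.1 * phi v q.2 * S.indicator (fun _ => (1:ℝ)) (ω, q) with hfdef
  have hfm : Measurable (Function.uncurry f) := by
    have h1 : Measurable fun z : Ω × (ℝ × ℝ) => phi u z.2.1 :=
      (phi_meas u).comp (measurable_fst.comp measurable_snd)
    have h2 : Measurable fun z : Ω × (ℝ × ℝ) => phi v z.2.2 :=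
      (phi_meas v).comp (measurable_snd.comp measurable_snd)
    exact (h1.mul h2).mul (measurable_const.indicator hSm)
  have hdom : Integrable (fun z : Ω × (ℝ × ℝ) => (1:ℝ) * (|phi u z.2.1| * |phi v z.2.2|))
      (μ.prod (volume.prod volume)) :=
    (integrable_const (1:ℝ)).mul_prod ((phi_integrable u).abs.mul_prod (phi_integrable v).abs)
  have hfi : Integrable (Function.uncurry f) (μ.prod (volume.prod volume)) := by
    refine hdom.mono' hfm.aestronglyMeasurable (Eventually.of_forall fun z => ?_)
    have : ‖Function.uncurry f z‖ = |phi u z.2.1| * |phi v z.2.2|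
        * |S.indicator (fun _ => (1:ℝ)) (z.1, z.2)| := by
      simp only [Function.uncurry, hfdef, Real.norm_eq_abs, abs_mul]
    rw [this, one_mul]
    have hind : |S.indicator (fun _ => (1:ℝ)) (z.1, z.2)| ≤ 1 := by
      rw [Set.indicator_apply]; split_ifs <;> simp
    calc |phi u z.2.1| * |phi v z.2.2| * |S.indicator (fun _ => (1:ℝ)) (z.1, z.2)|
        ≤ |phi u z.2.1| * |phi v z.2.2| * 1 :=
          mul_le_mul_of_nonneg_left hind (by positivity)
      _ = |phi u z.2.1| * |phi v z.2.2| := by ring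
  -- pointwise identity for the product g1 * g2
  have key1 : ∀ ω, g1 ω * g2 ω = ∫ q, f ω q ∂(volume.prod volume) := by
    intro ω
    have e1 : g1 ω = ∫ x, (Set.Iio (Y ω)).indicator (phi u) x := by
      rw [integral_indicator measurableSet_Iio, integral_Iio_phi hu]
    have e2 : g2 ω = ∫ y, (Set.Iio (Z ω)).indicator (phi v) y := by
      rw [integral_indicator measurableSet_Iio, integral_Iio_phi hv]
    rw [e1, e2, ← integral_prod_mul]
    refine integral_congr_ae (Eventually.of_forall fun q => ?_)
    simp only [hfdef, Set.indicator_apply, Set.mem_Iio, Set.mem_setOf_eq, hSdef]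
    split_ifs with h1 h2 h2 <;> simp_all <;> ring
  -- swap
  have hswap : ∫ ω, (∫ q, f ω q ∂(volume.prod volume)) ∂μ
      = ∫ q, (∫ ω, f ω q ∂μ) ∂(volume.prod volume) := integral_integral_swap hfi
  have hinner : ∀ q : ℝ × ℝ, (∫ ω, f ω q ∂μ)
      = phi u q.1 * phi v q.2 * (μ {ω | q.1 < Y ω ∧ q.2 < Z ω}).toReal := by
    intro q
    have hAm : MeasurableSet {ω | q.1 < Y ω ∧ q.2 < Z ω} :=
      (hY measurableSet_Ioi).inter (hZ measurableSet_Ioi)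
    have e : ∀ ω, f ω q = phi u q.1 * phi v q.2
        * ({ω | q.1 < Y ω ∧ q.2 < Z ω}).indicator (fun _ => (1:ℝ)) ω := by
      intro ω
      simp only [hfdef, Set.indicator_apply, Set.mem_setOf_eq, hSdef]
    rw [show (fun ω => f ω q) = fun ω => phi u q.1 * phi v q.2
        * ({ω | q.1 < Y ω ∧ q.2 < Z ω}).indicator (fun _ => (1:ℝ)) ω from funext e]
    rw [MeasureTheory.integral_const_mul, integral_indicator_const _ hAm]
    simp [measureReal_def]
  have hg12 : (∫ ω, g1 ω * g2 ω ∂μ) = ∫ q : ℝ × ℝ, phi u q.1 * phi v q.2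
      * (μ {ω | q.1 < Y ω ∧ q.2 < Z ω}).toReal ∂(volume.prod volume) := by
    rw [show (fun ω => g1 ω * g2 ω) = fun ω => ∫ q, f ω q ∂(volume.prod volume)
      from funext key1]
    rw [hswap]
    exact integral_congr_ae (Eventually.of_forall hinner)
  -- single integrals
  have keysingle : ∀ {W : Ω → ℝ} (hW : Measurable W) {w : ℝ} (hw : 0 < w),
      (∫ ω, (Ffn w (W ω) - 1) ∂μ) = ∫ x, phi w x * (μ {ω | x < W ω}).toReal ∂volume := by
    intro W hW w hw
    set T : Set (Ω × ℝ) := {z | z.2 < W z.1} with hTdef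
    have hTm : MeasurableSet T := measurableSet_lt measurable_snd (hW.comp measurable_fst)
    set h : Ω → ℝ → ℝ := fun ω x => phi w x * T.indicator (fun _ => (1:ℝ)) (ω, x) with hhdef
    have hhm : Measurable (Function.uncurry h) := by
      exact (((phi_meas w).comp measurable_snd).mul (measurable_const.indicator hTm))
    have hdom' : Integrable (fun z : Ω × ℝ => (1:ℝ) * |phi w z.2|) (μ.prod volume) :=
      (integrable_const (1:ℝ)).mul_prod (phi_integrable w).abs
    have hhi : Integrable (Function.uncurry h) (μ.prod volume) := by
      refine hdom'.mono' hhm.aestronglyMeasurable (Eventually.of_forall fun z => ?_)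
      rw [one_mul]
      have : ‖Function.uncurry h z‖ = |phi w z.2| * |T.indicator (fun _ => (1:ℝ)) (z.1, z.2)| := by
        simp only [Function.uncurry, hhdef, Real.norm_eq_abs, abs_mul]
      rw [this]
      have hind : |T.indicator (fun _ => (1:ℝ)) (z.1, z.2)| ≤ 1 := by
        rw [Set.indicator_apply]; split_ifs <;> simp
      calc |phi w z.2| * |T.indicator (fun _ => (1:ℝ)) (z.1, z.2)| ≤ |phi w z.2| * 1 :=
            mul_le_mul_of_nonneg_left hind (by positivity)
        _ = |phi w z.2| := by ring
    have e1 : ∀ ω, Ffn w (W ω) - 1 = ∫ x, h ω x ∂volume := by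
      intro ω
      rw [show Ffn w (W ω) - 1 = ∫ x, (Set.Iio (W ω)).indicator (phi w) x from by
        rw [integral_indicator measurableSet_Iio, integral_Iio_phi hw]]
      refine integral_congr_ae (Eventually.of_forall fun x => ?_)
      simp only [hhdef, Set.indicator_apply, Set.mem_Iio, Set.mem_setOf_eq, hTdef]
      split_ifs <;> simp
    rw [show (fun ω => Ffn w (W ω) - 1) = fun ω => ∫ x, h ω x ∂volume from funext e1]
    rw [integral_integral_swap hhi]
    refine integral_congr_ae (Eventually.of_forall fun x => ?_)
    show (∫ ω, h ω x ∂μ) = phi w x * (μ {ω | x < W ω}).toReal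
    have hAm : MeasurableSet {ω | x < W ω} := hW measurableSet_Ioi
    have e : ∀ ω, h ω x = phi w x * ({ω | x < W ω}).indicator (fun _ => (1:ℝ)) ω := by
      intro ω
      simp only [hhdef, Set.indicator_apply, Set.mem_setOf_eq, hTdef]
    rw [show (fun ω => h ω x) = fun ω => phi w x * ({ω | x < W ω}).indicator (fun _ => (1:ℝ)) ω
      from funext e]
    rw [MeasureTheory.integral_const_mul, integral_indicator_const _ hAm]
    simp [measureReal_def]
  have hsing1 : (∫ ω, g1 ω ∂μ) = ∫ x, phi u x * (μ {ω | x < Y ω}).toReal ∂volume :=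
    keysingle hY hu
  have hsing2 : (∫ ω, g2 ω ∂μ) = ∫ y, phi v y * (μ {ω | y < Z ω}).toReal ∂volume :=
    keysingle hZ hv
  rw [hg12, hsing1, hsing2, ← integral_prod_mul
    (f := fun x => phi u x * (μ {ω | x < Y ω}).toReal)
    (g := fun y => phi v y * (μ {ω | y < Z ω}).toReal)]
  -- combine the two product-space integrals
  have int1 : Integrable (fun q : ℝ × ℝ => phi u q.1 * phi v q.2
      * (μ {ω | q.1 < Y ω ∧ q.2 < Z ω}).toReal) (volume.prod volume) := by
    refine (((phi_integrable u).abs.mul_prod (phi_integrable v).abs)).mono'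
      ?_ (Eventually.of_forall fun q => ?_)
    · exact ((((phi_meas u).comp measurable_fst).mul
        ((phi_meas v).comp measurable_snd)).mul (meas_joint μ hY hZ)).aestronglyMeasurable
    · rw [Real.norm_eq_abs, abs_mul, abs_mul]
      have h1 : |(μ {ω | q.1 < Y ω ∧ q.2 < Z ω}).toReal| ≤ 1 := by
        rw [abs_of_nonneg ENNReal.toReal_nonneg]; exact toReal_prob_le_one μ _
      calc |phi u q.1| * |phi v q.2| * |(μ {ω | q.1 < Y ω ∧ q.2 < Z ω}).toReal|
          ≤ |phi u q.1| * |phi v q.2| * 1 := mul_le_mul_of_nonneg_left h1 (by positivity)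
        _ = |phi u q.1| * |phi v q.2| := by ring
  have int2 : Integrable (fun q : ℝ × ℝ => (phi u q.1 * (μ {ω | q.1 < Y ω}).toReal)
      * (phi v q.2 * (μ {ω | q.2 < Z ω}).toReal)) (volume.prod volume) := by
    refine (((phi_integrable u).abs.mul_prod (phi_integrable v).abs)).mono'
      ?_ (Eventually.of_forall fun q => ?_)
    · exact ((((phi_meas u).comp measurable_fst).mul
        ((meas_tail μ hY).comp measurable_fst)).mul
        (((phi_meas v).comp measurable_snd).mul
        ((meas_tail μ hZ).comp measurable_snd))).aestronglyMeasurable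
    · rw [Real.norm_eq_abs, abs_mul, abs_mul, abs_mul]
      have h1 : |(μ {ω | q.1 < Y ω}).toReal| ≤ 1 := by
        rw [abs_of_nonneg ENNReal.toReal_nonneg]; exact toReal_prob_le_one μ _
      have h2 : |(μ {ω | q.2 < Z ω}).toReal| ≤ 1 := by
        rw [abs_of_nonneg ENNReal.toReal_nonneg]; exact toReal_prob_le_one μ _
      calc |phi u q.1| * |(μ {ω | q.1 < Y ω}).toReal|
            * (|phi v q.2| * |(μ {ω | q.2 < Z ω}).toReal|)
          ≤ |phi u q.1| * 1 * (|phi v q.2| * 1) := by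
            refine mul_le_mul ?_ ?_ (by positivity) (by positivity)
            · exact mul_le_mul_of_nonneg_left h1 (by positivity)
            · exact mul_le_mul_of_nonneg_left h2 (by positivity)
        _ = |phi u q.1| * |phi v q.2| := by ring
  rw [← integral_sub int1 int2]
  refine integral_congr_ae (Eventually.of_forall fun q => ?_)
  ring


end
section

lemma chung_erdos {Ω : Type*} [MeasurableSpace Ω] (μ : Measure Ω) [IsProbabilityMeasure μ]
    {ι : Type*} (s : Finset ι) (A : ι → Set Ω) (hA : ∀ i, MeasurableSet (A i)) :
    (∑ i ∈ s, (μ (A i)).toReal)^2 ≤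
      (μ (⋃ i ∈ s, A i)).toReal * ∑ i ∈ s, ∑ j ∈ s, (μ (A i ∩ A j)).toReal := by
  classical
  set Y : Ω → ℝ := fun ω => ∑ i ∈ s, (A i).indicator (fun _ => (1:ℝ)) ω with hYdef
  set U : Set Ω := ⋃ i ∈ s, A i with hUdef
  have hUm : MeasurableSet U := MeasurableSet.biUnion s.countable_toSet (fun i _ => hA i)
  have hindint : ∀ (B : Set Ω), MeasurableSet B → Integrable (B.indicator (fun _ => (1:ℝ))) μ := by
    intro B hB
    rw [integrable_indicator_iff hB]
    exact (integrableOn_const_iff).mpr (Or.inr (measure_lt_top μ B))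
  have hYint : Integrable Y μ := integrable_finset_sum _ (fun i _ => hindint _ (hA i))
  have hYsq : ∀ ω, Y ω * Y ω
      = ∑ i ∈ s, ∑ j ∈ s, ((A i ∩ A j).indicator (fun _ => (1:ℝ)) ω) := by
    intro ω
    rw [hYdef]
    rw [Finset.sum_mul_sum]
    refine Finset.sum_congr rfl fun i _ => Finset.sum_congr rfl fun j _ => ?_
    by_cases hi : ω ∈ A i <;> by_cases hj : ω ∈ A j
    · rw [Set.indicator_of_mem hi, Set.indicator_of_mem hj, Set.indicator_of_mem (Set.mem_inter hi hj)]
      norm_num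
    · rw [Set.indicator_of_mem hi, Set.indicator_of_notMem hj,
        Set.indicator_of_notMem (fun h => hj h.2)]
      norm_num
    · rw [Set.indicator_of_notMem hi, Set.indicator_of_mem hj,
        Set.indicator_of_notMem (fun h => hi h.1)]
      norm_num
    · rw [Set.indicator_of_notMem hi, Set.indicator_of_notMem hj,
        Set.indicator_of_notMem (fun h => hi h.1)]
      norm_num
  have hYYint : Integrable (fun ω => Y ω * Y ω) μ := by
    rw [show (fun ω => Y ω * Y ω)
      = fun ω => ∑ i ∈ s, ∑ j ∈ s, ((A i ∩ A j).indicator (fun _ => (1:ℝ)) ω)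
      from funext hYsq]
    exact integrable_finset_sum _ (fun i _ =>
      integrable_finset_sum _ (fun j _ => hindint _ ((hA i).inter (hA j))))
  have hEY : ∫ ω, Y ω ∂μ = ∑ i ∈ s, (μ (A i)).toReal := by
    rw [hYdef]
    rw [integral_finset_sum _ (fun i _ => hindint _ (hA i))]
    refine Finset.sum_congr rfl fun i _ => ?_
    rw [integral_indicator_const _ (hA i)]
    simp [measureReal_def]
  have hEYY : ∫ ω, Y ω * Y ω ∂μ = ∑ i ∈ s, ∑ j ∈ s, (μ (A i ∩ A j)).toReal := by
    rw [show (fun ω => Y ω * Y ω)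
      = fun ω => ∑ i ∈ s, ∑ j ∈ s, ((A i ∩ A j).indicator (fun _ => (1:ℝ)) ω)
      from funext hYsq]
    rw [integral_finset_sum _ (fun i _ =>
      integrable_finset_sum _ (fun j _ => hindint _ ((hA i).inter (hA j))))]
    refine Finset.sum_congr rfl fun i _ => ?_
    rw [integral_finset_sum _ (fun j _ => hindint _ ((hA i).inter (hA j)))]
    refine Finset.sum_congr rfl fun j _ => ?_
    rw [integral_indicator_const _ ((hA i).inter (hA j))]
    simp [measureReal_def]
  have hYU : ∀ ω, Y ω * U.indicator (fun _ => (1:ℝ)) ω = Y ω := by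
    intro ω
    by_cases hω : ω ∈ U
    · rw [Set.indicator_of_mem hω]; ring
    · rw [Set.indicator_of_notMem hω, mul_zero]
      rw [hYdef]
      symm
      refine Finset.sum_eq_zero fun i hi => ?_
      refine Set.indicator_of_notMem (fun hmem => hω ?_) _
      rw [hUdef]
      exact Set.mem_biUnion hi hmem
  have key : ∀ a : ℝ, 0 ≤ (∑ i ∈ s, ∑ j ∈ s, (μ (A i ∩ A j)).toReal) * (a * a)
      + (-2 * ∑ i ∈ s, (μ (A i)).toReal) * a + (μ U).toReal := by
    intro a
    have hnn : 0 ≤ ∫ ω, (a * Y ω - U.indicator (fun _ => (1:ℝ)) ω)^2 ∂μ :=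
      integral_nonneg fun ω => sq_nonneg _
    have hexp : ∀ ω, (a * Y ω - U.indicator (fun _ => (1:ℝ)) ω)^2
        = (a * a) * (Y ω * Y ω) - (2 * a) * Y ω + U.indicator (fun _ => (1:ℝ)) ω := by
      intro ω
      have hUsq : U.indicator (fun _ => (1:ℝ)) ω * U.indicator (fun _ => (1:ℝ)) ω
          = U.indicator (fun _ => (1:ℝ)) ω := by
        by_cases hω : ω ∈ U
        · rw [Set.indicator_of_mem hω]; ring
        · rw [Set.indicator_of_notMem hω]; ring
      have h2 := hYU ω
      have expand : (a * Y ω - U.indicator (fun _ => (1:ℝ)) ω)^2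
          = a*a*(Y ω * Y ω) - 2*a*(Y ω * U.indicator (fun _ => (1:ℝ)) ω)
            + U.indicator (fun _ => (1:ℝ)) ω * U.indicator (fun _ => (1:ℝ)) ω := by ring
      rw [expand, h2, hUsq]
    have hint1 : Integrable (fun ω => (a * a) * (Y ω * Y ω) - (2 * a) * Y ω) μ :=
      (hYYint.const_mul _).sub (hYint.const_mul _)
    have heq : ∫ ω, (a * Y ω - U.indicator (fun _ => (1:ℝ)) ω)^2 ∂μ
        = (a * a) * (∑ i ∈ s, ∑ j ∈ s, (μ (A i ∩ A j)).toReal)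
          - (2 * a) * (∑ i ∈ s, (μ (A i)).toReal) + (μ U).toReal := by
      rw [show (fun ω => (a * Y ω - U.indicator (fun _ => (1:ℝ)) ω)^2)
        = fun ω => ((a * a) * (Y ω * Y ω) - (2 * a) * Y ω) + U.indicator (fun _ => (1:ℝ)) ω
        from funext fun ω => by rw [hexp ω]]
      rw [integral_add hint1 (hindint _ hUm),
        integral_sub (hYYint.const_mul _) (hYint.const_mul _),
        MeasureTheory.integral_const_mul, MeasureTheory.integral_const_mul, hEY, hEYY,
        integral_indicator_const _ hUm]
      simp [measureReal_def]
    rw [heq] at hnn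
    nlinarith [hnn]
  have hd := discrim_le_zero key
  rw [discrim] at hd
  nlinarith [hd]


end

section

variable {Ω : Type*} [MeasurableSpace Ω] (μ : Measure Ω) [IsProbabilityMeasure μ]
variable {Y Z : Ω → ℝ}

lemma measure_compl_toReal {A : Set Ω} (hA : MeasurableSet A) :
    (μ Aᶜ).toReal = 1 - (μ A).toReal := by
  rw [measure_compl hA (measure_ne_top μ A), measure_univ,
    ENNReal.toReal_sub_of_le prob_le_one ENNReal.one_ne_top]
  simp

/-- positivity of the PQD covariance kernel -/
lemma Hfun_nonneg_of_pqd (hY : Measurable Y) (hZ : Measurable Z)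
    (hpqd : ∀ x y : ℝ, (μ {ω | Y ω ≤ x}).toReal * (μ {ω | Z ω ≤ y}).toReal ≤
      (μ {ω | Y ω ≤ x ∧ Z ω ≤ y}).toReal) (x y : ℝ) :
    0 ≤ Hfun μ Y Z x y := by
  set A : Set Ω := {ω | Y ω ≤ x} with hAdef
  set B : Set Ω := {ω | Z ω ≤ y} with hBdef
  have hAm : MeasurableSet A := hY measurableSet_Iic
  have hBm : MeasurableSet B := hZ measurableSet_Iic
  have hsetY : {ω | x < Y ω} = Aᶜ := by
    ext ω; simp [hAdef, not_le]
  have hsetZ : {ω | y < Z ω} = Bᶜ := by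
    ext ω; simp [hBdef, not_le]
  have hsetYZ : {ω | x < Y ω ∧ y < Z ω} = Aᶜ ∩ Bᶜ := by
    ext ω; simp [hAdef, hBdef, not_le]
  have hAB : A ∩ B = {ω | Y ω ≤ x ∧ Z ω ≤ y} := rfl
  set a := (μ A).toReal
  set b := (μ B).toReal
  set m := (μ (A ∩ B)).toReal
  have hu : (μ (A ∪ B)).toReal + m = a + b := by
    rw [← ENNReal.toReal_add (measure_ne_top μ _) (measure_ne_top μ _),
      ← ENNReal.toReal_add (measure_ne_top μ _) (measure_ne_top μ _),
      measure_union_add_inter A hBm]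
  have hcc : (μ (Aᶜ ∩ Bᶜ)).toReal = 1 - a - b + m := by
    rw [← Set.compl_union, measure_compl_toReal μ (hAm.union hBm)]
    have : (μ (A ∪ B)).toReal = a + b - m := by linarith
    rw [this]; ring
  have hYc : (μ Aᶜ).toReal = 1 - a := measure_compl_toReal μ hAm
  have hZc : (μ Bᶜ).toReal = 1 - b := measure_compl_toReal μ hBm
  have hpq := hpqd x y
  rw [← hAB] at hpq
  unfold Hfun
  rw [hsetY, hsetZ, hsetYZ, hcc, hYc, hZc]
  nlinarith [hpq]

/-- the key per-pair bound -/
lemma pair_bound (hY : Measurable Y) (hZ : Measurable Z) {u v : ℝ}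
    (hu : 0 < u) (hv : 0 < v) (hH : ∀ x y, 0 ≤ Hfun μ Y Z x y) :
    (μ ({ω | 3*u/4 ≤ |Y ω|} ∩ {ω | 3*v/4 ≤ |Z ω|})).toReal
      ≤ (μ {ω | u/2 ≤ |Y ω|}).toReal * (μ {ω | v/2 ≤ |Z ω|}).toReal
        + 16/(u*v) * ∫ y in (-v)..v, ∫ x in (-u)..u, Hfun μ Y Z x y := by
  have hFum : Measurable (fun ω => Ffn u (Y ω)) := (Ffn_continuous u).measurable.comp hY
  have hFvm : Measurable (fun ω => Ffn v (Z ω)) := (Ffn_continuous v).measurable.comp hZ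
  have hFub : ∀ ω, ‖Ffn u (Y ω)‖ ≤ 1 := fun ω => by
    rw [Real.norm_eq_abs, abs_of_nonneg (Ffn_nonneg hu _)]; exact Ffn_le_one hu _
  have hFvb : ∀ ω, ‖Ffn v (Z ω)‖ ≤ 1 := fun ω => by
    rw [Real.norm_eq_abs, abs_of_nonneg (Ffn_nonneg hv _)]; exact Ffn_le_one hv _
  have hFui : Integrable (fun ω => Ffn u (Y ω)) μ :=
    (integrable_const (1:ℝ)).mono' hFum.aestronglyMeasurable (Eventually.of_forall hFub)
  have hFvi : Integrable (fun ω => Ffn v (Z ω)) μ :=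
    (integrable_const (1:ℝ)).mono' hFvm.aestronglyMeasurable (Eventually.of_forall hFvb)
  have hFFi : Integrable (fun ω => Ffn u (Y ω) * Ffn v (Z ω)) μ := by
    refine (integrable_const (1:ℝ)).mono' (hFum.mul hFvm).aestronglyMeasurable
      (Eventually.of_forall fun ω => ?_)
    rw [norm_mul]
    calc ‖Ffn u (Y ω)‖ * ‖Ffn v (Z ω)‖ ≤ 1 * 1 :=
        mul_le_mul (hFub ω) (hFvb ω) (norm_nonneg _) zero_le_one
      _ = 1 := by ring
  have hSAm : MeasurableSet ({ω | 3*u/4 ≤ |Y ω|} ∩ {ω | 3*v/4 ≤ |Z ω|}) :=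
    (measurableSet_le measurable_const hY.abs).inter (measurableSet_le measurable_const hZ.abs)
  -- step 1: measure of intersection ≤ E[F_u(Y) F_v(Z)]
  have h1 : (μ ({ω | 3*u/4 ≤ |Y ω|} ∩ {ω | 3*v/4 ≤ |Z ω|})).toReal
      ≤ ∫ ω, Ffn u (Y ω) * Ffn v (Z ω) ∂μ := by
    have hptw : ∀ ω, ({ω | 3*u/4 ≤ |Y ω|} ∩ {ω | 3*v/4 ≤ |Z ω|}).indicator
        (fun _ => (1:ℝ)) ω ≤ Ffn u (Y ω) * Ffn v (Z ω) := by
      intro ω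
      by_cases hω : ω ∈ ({ω | 3*u/4 ≤ |Y ω|} ∩ {ω | 3*v/4 ≤ |Z ω|})
      · rw [Set.indicator_of_mem hω]
        rcases hω with ⟨h1', h2'⟩
        rw [Ffn_eq_one hu h1', Ffn_eq_one hv h2']
        norm_num
      · rw [Set.indicator_of_notMem hω]
        exact mul_nonneg (Ffn_nonneg hu _) (Ffn_nonneg hv _)
    have hii : Integrable (({ω | 3*u/4 ≤ |Y ω|} ∩ {ω | 3*v/4 ≤ |Z ω|}).indicator
        (fun _ => (1:ℝ))) μ := by
      rw [integrable_indicator_iff hSAm]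
      exact (integrableOn_const_iff).mpr (Or.inr (measure_lt_top μ _))
    calc (μ ({ω | 3*u/4 ≤ |Y ω|} ∩ {ω | 3*v/4 ≤ |Z ω|})).toReal
        = ∫ ω, ({ω | 3*u/4 ≤ |Y ω|} ∩ {ω | 3*v/4 ≤ |Z ω|}).indicator (fun _ => (1:ℝ)) ω ∂μ := by
          rw [integral_indicator_const _ hSAm]; simp [measureReal_def]
      _ ≤ ∫ ω, Ffn u (Y ω) * Ffn v (Z ω) ∂μ := integral_mono hii hFFi hptw
  -- step 2: Hoeffding + G bound
  have h2 := hoeffding μ hY hZ hu hv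
  have h3 := cov_integral_le_G μ hY hZ hu hv hH
  -- step 3: expectations bounded by tail probabilities
  have h4 : ∫ ω, Ffn u (Y ω) ∂μ ≤ (μ {ω | u/2 ≤ |Y ω|}).toReal := by
    have hBm : MeasurableSet {ω | u/2 ≤ |Y ω|} := measurableSet_le measurable_const hY.abs
    have hbi : Integrable ({ω | u/2 ≤ |Y ω|}.indicator (fun _ => (1:ℝ))) μ := by
      rw [integrable_indicator_iff hBm]
      exact (integrableOn_const_iff).mpr (Or.inr (measure_lt_top μ _))
    have hptw : ∀ ω, Ffn u (Y ω) ≤ {ω | u/2 ≤ |Y ω|}.indicator (fun _ => (1:ℝ)) ω := by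
      intro ω
      by_cases hω : ω ∈ {ω | u/2 ≤ |Y ω|}
      · rw [Set.indicator_of_mem hω]; exact Ffn_le_one hu _
      · rw [Set.indicator_of_notMem hω]
        rw [Ffn_eq_zero hu (by simpa using le_of_not_ge (by simpa using hω))]
    calc ∫ ω, Ffn u (Y ω) ∂μ ≤ ∫ ω, {ω | u/2 ≤ |Y ω|}.indicator (fun _ => (1:ℝ)) ω ∂μ :=
          integral_mono hFui hbi hptw
      _ = (μ {ω | u/2 ≤ |Y ω|}).toReal := by rw [integral_indicator_const _ hBm]; simp [measureReal_def]
  have h5 : ∫ ω, Ffn v (Z ω) ∂μ ≤ (μ {ω | v/2 ≤ |Z ω|}).toReal := by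
    have hBm : MeasurableSet {ω | v/2 ≤ |Z ω|} := measurableSet_le measurable_const hZ.abs
    have hbi : Integrable ({ω | v/2 ≤ |Z ω|}.indicator (fun _ => (1:ℝ))) μ := by
      rw [integrable_indicator_iff hBm]
      exact (integrableOn_const_iff).mpr (Or.inr (measure_lt_top μ _))
    have hptw : ∀ ω, Ffn v (Z ω) ≤ {ω | v/2 ≤ |Z ω|}.indicator (fun _ => (1:ℝ)) ω := by
      intro ω
      by_cases hω : ω ∈ {ω | v/2 ≤ |Z ω|}
      · rw [Set.indicator_of_mem hω]; exact Ffn_le_one hv _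
      · rw [Set.indicator_of_notMem hω]
        rw [Ffn_eq_zero hv (by simpa using le_of_not_ge (by simpa using hω))]
    calc ∫ ω, Ffn v (Z ω) ∂μ ≤ ∫ ω, {ω | v/2 ≤ |Z ω|}.indicator (fun _ => (1:ℝ)) ω ∂μ :=
          integral_mono hFvi hbi hptw
      _ = (μ {ω | v/2 ≤ |Z ω|}).toReal := by rw [integral_indicator_const _ hBm]; simp [measureReal_def]
  have h6 : 0 ≤ ∫ ω, Ffn u (Y ω) ∂μ := integral_nonneg fun ω => Ffn_nonneg hu _
  have h7 : 0 ≤ ∫ ω, Ffn v (Z ω) ∂μ := integral_nonneg fun ω => Ffn_nonneg hv _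
  have h8 : (∫ ω, Ffn u (Y ω) ∂μ) * (∫ ω, Ffn v (Z ω) ∂μ)
      ≤ (μ {ω | u/2 ≤ |Y ω|}).toReal * (μ {ω | v/2 ≤ |Z ω|}).toReal :=
    mul_le_mul h4 h5 h7 ENNReal.toReal_nonneg
  -- note Hoeffding expresses the covariance as the product-space integral
  have hcov : (∫ ω, Ffn u (Y ω) * Ffn v (Z ω) ∂μ)
      = (∫ q : ℝ × ℝ, phi u q.1 * phi v q.2 * Hfun μ Y Z q.1 q.2 ∂(volume.prod volume))
        + (∫ ω, Ffn u (Y ω) ∂μ) * (∫ ω, Ffn v (Z ω) ∂μ) := by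
    have : (∫ q : ℝ × ℝ, phi u q.1 * phi v q.2 * Hfun μ Y Z q.1 q.2 ∂(volume.prod volume))
        = (∫ ω, Ffn u (Y ω) * Ffn v (Z ω) ∂μ) -
          (∫ ω, Ffn u (Y ω) ∂μ) * (∫ ω, Ffn v (Z ω) ∂μ) := by
      simp only [Hfun]; exact h2.symm
    linarith [this]
  linarith [h1, h3, h8, hcov]


end
section

lemma single_term_tendsto {p : ℝ} (hp1 : 1 ≤ p) (x : ℕ → ℝ) (c : ℝ)
    (ht : Tendsto (fun n => (∑ k ∈ Finset.Icc 1 n, (x k - c)) / (n:ℝ)^(1/p)) atTop (𝓝 0)) :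
    Tendsto (fun n => (x n - c) / (n:ℝ)^(1/p)) atTop (𝓝 0) := by
  have hp0 : 0 < p := lt_of_lt_of_le one_pos hp1
  have hip : 0 < 1/p := by positivity
  set up : ℕ → ℝ := fun n => (n:ℝ)^(1/p) with hupdef
  have hup0 : up 0 = 0 := by
    simp only [hupdef, Nat.cast_zero]
    exact Real.zero_rpow (ne_of_gt hip)
  have hup_nonneg : ∀ n, 0 ≤ up n := fun n => Real.rpow_nonneg (Nat.cast_nonneg n) _
  have hup_pos : ∀ n, 1 ≤ n → 0 < up n := fun n hn =>
    Real.rpow_pos_of_pos (by exact_mod_cast Nat.lt_of_lt_of_le Nat.zero_lt_one hn) _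
  have hup_mono : ∀ a b : ℕ, a ≤ b → up a ≤ up b := fun a b hab =>
    Real.rpow_le_rpow (Nat.cast_nonneg a) (by exact_mod_cast hab) hip.le
  set t : ℕ → ℝ := fun n => (∑ k ∈ Finset.Icc 1 n, (x k - c)) / up n with htdef
  have hratio : ∀ n : ℕ, 0 ≤ up (n-1) / up n ∧ up (n-1) / up n ≤ 1 := by
    intro n
    constructor
    · exact div_nonneg (hup_nonneg _) (hup_nonneg _)
    · rcases Nat.eq_zero_or_pos n with h0 | hpos
      · subst h0; simp [hup0]
      · exact div_le_one_of_le₀ (hup_mono _ _ (Nat.sub_le n 1)) (hup_nonneg n)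
  have hshift : Tendsto (fun n => |t (n-1)|) atTop (𝓝 0) := by
    have h1 : Tendsto (fun n : ℕ => t (n-1)) atTop (𝓝 0) :=
      ht.comp (tendsto_sub_atTop_nat 1)
    have := h1.abs
    rwa [abs_zero] at this
  have hs : Tendsto (fun n => t (n-1) * (up (n-1) / up n)) atTop (𝓝 0) := by
    refine squeeze_zero_norm (fun n => ?_) hshift
    rw [norm_mul, Real.norm_eq_abs, Real.norm_eq_abs]
    calc |t (n-1)| * |up (n-1)/up n| ≤ |t (n-1)| * 1 := by
          refine mul_le_mul_of_nonneg_left ?_ (abs_nonneg _)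
          rw [abs_of_nonneg (hratio n).1]
          exact (hratio n).2
      _ = |t (n-1)| := by ring
  have hdiff : Tendsto (fun n => t n - t (n-1) * (up (n-1) / up n)) atTop (𝓝 0) := by
    have := ht.sub hs
    rwa [sub_zero] at this
  refine hdiff.congr' ?_
  filter_upwards [eventually_ge_atTop 1] with n hn
  obtain ⟨m, rfl⟩ : ∃ m, n = m + 1 := ⟨n - 1, by omega⟩
  have hsucc : (m+1) - 1 = m := by omega
  rw [hsucc]
  have hsum : ∑ k ∈ Finset.Icc 1 (m+1), (x k - c)
      = (∑ k ∈ Finset.Icc 1 m, (x k - c)) + (x (m+1) - c) :=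
    Finset.sum_Icc_succ_top (by omega) _
  rcases Nat.eq_zero_or_pos m with h0 | hm
  · subst h0
    simp only [htdef, hup0, div_zero, zero_mul, sub_zero]
    congr 1
    · rw [hsum]; simp
  · have hupm : 0 < up m := hup_pos m hm
    have hupm1 : 0 < up (m+1) := hup_pos (m+1) (by omega)
    simp only [htdef]
    rw [hsum]
    field_simp
    simp only [hupdef]; push_cast; ring
lemma eventually_small {p : ℝ} (hp1 : 1 ≤ p) (x : ℕ → ℝ) (c : ℝ)
    (ht : Tendsto (fun n => (∑ k ∈ Finset.Icc 1 n, (x k - c)) / (n:ℝ)^(1/p)) atTop (𝓝 0)) :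
    ∀ᶠ n : ℕ in atTop, ¬ (3*((n:ℝ)^(1/p))/4 ≤ |x n|) := by
  have hp0 : 0 < p := lt_of_lt_of_le one_pos hp1
  have hip : 0 < 1/p := by positivity
  have hsingle := single_term_tendsto hp1 x c ht
  have h14 : ∀ᶠ n in atTop, |(x n - c) / (n:ℝ)^(1/p)| < 1/4 := by
    have := hsingle.eventually (Metric.ball_mem_nhds (0:ℝ) (by norm_num : (0:ℝ) < 1/4))
    refine this.mono fun n hn => ?_
    have hn2 := Metric.mem_ball.mp hn
    rwa [Real.dist_0_eq_abs] at hn2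
  have hctop : Tendsto (fun n : ℕ => ((n:ℝ)^(1/p))) atTop atTop := by
    exact (tendsto_rpow_atTop hip).comp tendsto_natCast_atTop_atTop
  have hc : ∀ᶠ n : ℕ in atTop, 4*|c| < (n:ℝ)^(1/p) := hctop.eventually_gt_atTop (4*|c|)
  filter_upwards [h14, hc, eventually_ge_atTop 1] with n h1 h2 h3
  have hupn : 0 < (n:ℝ)^(1/p) :=
    Real.rpow_pos_of_pos (by exact_mod_cast Nat.lt_of_lt_of_le Nat.zero_lt_one h3) _
  rw [abs_div, div_lt_iff₀ (by rwa [abs_of_pos hupn])] at h1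
  rw [abs_of_pos hupn] at h1
  intro hcon
  have : |x n| ≤ |x n - c| + |c| := by
    calc |x n| = |(x n - c) + c| := by ring_nf
      _ ≤ |x n - c| + |c| := abs_add_le _ _
  nlinarith [this, h1, h2, hcon, hupn]


end
section

lemma beta_tau_sum {τ β : ℕ → ℝ} (hτ0 : ∀ i, 0 ≤ τ i) (hβ1 : ∀ i, β i ≤ 1)
    (hβτ : ∀ i, 3 ≤ i → β i ≤ τ (i/3)) (n : ℕ) :
    ∑ i ∈ Finset.Ioc 0 n, β i ≤ 2 + 3 * ∑ j ∈ Finset.Ioc 0 n, τ j := by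
  classical
  have step1 : ∑ i ∈ Finset.Ioc 0 n, β i
      ≤ ∑ i ∈ Finset.Ioc 0 n, (if i ≤ 2 then (1:ℝ) else τ (i/3)) := by
    refine Finset.sum_le_sum fun i _ => ?_
    by_cases hi : i ≤ 2
    · rw [if_pos hi]; exact hβ1 i
    · rw [if_neg hi]; exact hβτ i (by omega)
  rw [Finset.sum_ite] at step1
  have hfirst : ∑ _i ∈ (Finset.Ioc 0 n).filter (fun i => i ≤ 2), (1:ℝ) ≤ 2 := by
    rw [Finset.sum_const]
    have hsub : (Finset.Ioc 0 n).filter (fun i => i ≤ 2) ⊆ Finset.Ioc 0 2 := by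
      intro i hi
      simp only [Finset.mem_filter, Finset.mem_Ioc] at hi ⊢
      omega
    have hcard : ((Finset.Ioc 0 n).filter (fun i => i ≤ 2)).card ≤ 2 := by
      have h2 := Finset.card_le_card hsub
      rw [Nat.card_Ioc] at h2
      omega
    rw [nsmul_eq_mul, mul_one]
    exact_mod_cast hcard
  have hsecond : ∑ i ∈ (Finset.Ioc 0 n).filter (fun i => ¬ i ≤ 2), τ (i/3)
      ≤ 3 * ∑ j ∈ Finset.Ioc 0 n, τ j := by
    set s2 := (Finset.Ioc 0 n).filter (fun i => ¬ i ≤ 2) with hs2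
    rw [Finset.sum_comp (s := s2) τ (fun i => i/3)]
    have himg : s2.image (fun i => i/3) ⊆ Finset.Ioc 0 n := by
      intro j hj
      rw [Finset.mem_image] at hj
      obtain ⟨i, hi, rfl⟩ := hj
      simp only [hs2, Finset.mem_filter, Finset.mem_Ioc] at hi ⊢
      omega
    have hcard3 : ∀ j, (s2.filter (fun i => i/3 = j)).card ≤ 3 := by
      intro j
      have hsub : s2.filter (fun i => i/3 = j) ⊆ Finset.Icc (3*j) (3*j+2) := by
        intro i hi
        simp only [Finset.mem_filter, Finset.mem_Icc] at hi ⊢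
        omega
      have h2 := Finset.card_le_card hsub
      rw [Nat.card_Icc] at h2
      omega
    calc ∑ j ∈ s2.image (fun i => i/3), (s2.filter (fun i => i/3 = j)).card • τ j
        ≤ ∑ j ∈ s2.image (fun i => i/3), 3 * τ j := by
          refine Finset.sum_le_sum fun j _ => ?_
          rw [nsmul_eq_mul]
          exact mul_le_mul_of_nonneg_right (by exact_mod_cast hcard3 j) (hτ0 j)
      _ ≤ ∑ j ∈ Finset.Ioc 0 n, 3 * τ j := by
          refine Finset.sum_le_sum_of_subset_of_nonneg himg fun j _ _ => ?_
          exact mul_nonneg (by norm_num) (hτ0 j)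
      _ = 3 * ∑ j ∈ Finset.Ioc 0 n, τ j := by rw [Finset.mul_sum]
  linarith [step1, hfirst, hsecond]

lemma ratio_tendsto (K B : ℝ) (hB : 0 ≤ B) :
    Tendsto (fun S : ℝ => S^2/(S + (2 + 3*K + 3*S)^2 + 32*B)) atTop (𝓝 (1/9)) := by
  have hden : Tendsto (fun S : ℝ => 1/S + ((2+3*K)/S + 3)^2 + 32*B/S^2) atTop
      (𝓝 (0 + (0 + 3)^2 + 0)) := by
    have t0 : Tendsto (fun S : ℝ => S⁻¹) atTop (𝓝 0) := tendsto_inv_atTop_zero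
    have t1 : Tendsto (fun S : ℝ => 1/S) atTop (𝓝 0) := by
      simpa [one_div] using t0
    have t2 : Tendsto (fun S : ℝ => (2+3*K)/S) atTop (𝓝 0) := by
      have := t0.const_mul (2+3*K)
      simpa [div_eq_mul_inv, mul_zero] using this
    have t3 : Tendsto (fun S : ℝ => ((2+3*K)/S + 3)^2) atTop (𝓝 ((0 + 3)^2)) :=
      (t2.add_const 3).pow 2
    have t4 : Tendsto (fun S : ℝ => 32*B/S^2) atTop (𝓝 0) := by
      have h0 : Tendsto (fun S : ℝ => (32*B) * (S⁻¹ * S⁻¹)) atTop (𝓝 ((32*B) * (0*0))) :=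
        ((t0.mul t0)).const_mul (32*B)
      simpa [div_eq_mul_inv, pow_two, mul_inv] using h0
    exact (t1.add t3).add t4
  have h9 : (0:ℝ) + (0 + 3)^2 + 0 = 9 := by norm_num
  rw [h9] at hden
  have hfin : Tendsto (fun S : ℝ => 1/(1/S + ((2+3*K)/S + 3)^2 + 32*B/S^2)) atTop
      (𝓝 (1/9)) :=
    tendsto_const_nhds.div hden (by norm_num)
  refine Tendsto.congr' ?_ hfin
  filter_upwards [eventually_ge_atTop (1:ℝ)] with S hS
  have hS0 : (0:ℝ) < S := by linarith
  have hden0 : 0 < S + (2 + 3*K + 3*S)^2 + 32*B := by positivity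
  field_simp

end
end Stmt8Aux

open Stmt8Aux

theorem stmt8 {Ω : Type*} [MeasureSpace Ω] [IsProbabilityMeasure (volume : Measure Ω)]
    (X : ℕ → Ω → ℝ) (hX : ∀ n, Measurable (X n))
    (hid : ∀ n, Measure.map (X n) volume = Measure.map (X 1) volume)
    (hPQD : ∀ k j, k ≠ j → ∀ x y : ℝ,
      (volume {ω | X k ω ≤ x}).toReal * (volume {ω | X j ω ≤ y}).toReal ≤
        (volume {ω | X k ω ≤ x ∧ X j ω ≤ y}).toReal)
    (p : ℝ) (hp1 : 1 ≤ p) (hp2 : p < 2) (c : ℝ)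
    (hslln : ∀ᵐ ω,
      Tendsto (fun n => (∑ k ∈ Finset.Icc 1 n, (X k ω - c)) / (n : ℝ) ^ (1 / p))
        atTop (𝓝 0))
    (G : ℕ → ℕ → ℝ → ℝ → ℝ)
    (hG : ∀ k j u v, G k j u v = ∫ y in (-v)..v, ∫ x in (-u)..u,
      ((volume {ω | X k ω > x ∧ X j ω > y}).toReal -
        (volume {ω | X k ω > x}).toReal * (volume {ω | X j ω > y}).toReal))
    (hsum : Summable (fun kj : ℕ × ℕ =>
      if 1 ≤ kj.1 ∧ kj.1 < kj.2 then
        ((kj.1 : ℝ) * kj.2) ^ (-(1 : ℝ) / p) *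
          G kj.1 kj.2 ((kj.1 : ℝ) ^ (1 / p)) ((kj.2 : ℝ) ^ (1 / p))
      else 0)) :
    Summable (fun k : ℕ => (volume {ω | |X 1 ω| > ((k : ℝ) + 1) ^ (1 / p)}).toReal) := by
  classical
  have hp0 : 0 < p := lt_of_lt_of_le one_pos hp1
  have hip : 0 < 1/p := by positivity
  set μ : Measure Ω := volume with hμdef
  set up : ℕ → ℝ := fun n => (n:ℝ)^(1/p) with hupdef
  have hup_nonneg : ∀ n, 0 ≤ up n := fun n => Real.rpow_nonneg (Nat.cast_nonneg n) _
  have hup_pos : ∀ n : ℕ, 1 ≤ n → 0 < up n := fun n hn =>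
    Real.rpow_pos_of_pos (by exact_mod_cast Nat.lt_of_lt_of_le Nat.zero_lt_one hn) _
  set A : ℕ → Set Ω := fun i => {ω | 3*(up i)/4 ≤ |X i ω|} with hAdef
  have hAm : ∀ i, MeasurableSet (A i) := fun i =>
    measurableSet_le measurable_const (hX i).abs
  have hmap : ∀ (i : ℕ) (S : Set ℝ), MeasurableSet S → μ (X i ⁻¹' S) = μ (X 1 ⁻¹' S) := by
    intro i S hS
    rw [hμdef, ← Measure.map_apply (hX i) hS, hid i, Measure.map_apply (hX 1) hS]
  have habs_meas : ∀ a : ℝ, MeasurableSet {x : ℝ | a ≤ |x|} :=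
    fun a => measurableSet_le measurable_const measurable_id.abs
  set τ : ℕ → ℝ := fun i => (μ {ω | 3*(up i)/4 ≤ |X 1 ω|}).toReal with hτdef
  set β : ℕ → ℝ := fun i => (μ {ω | (up i)/2 ≤ |X 1 ω|}).toReal with hβdef
  have hAτ : ∀ i, (μ (A i)).toReal = τ i := by
    intro i
    have h1 : μ (A i) = μ (X i ⁻¹' {x : ℝ | 3*(up i)/4 ≤ |x|}) := rfl
    have h2 : (μ {ω | 3*(up i)/4 ≤ |X 1 ω|}) = μ (X 1 ⁻¹' {x : ℝ | 3*(up i)/4 ≤ |x|}) := rfl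
    simp only [hτdef, h1, h2, hmap i _ (habs_meas _)]
  have hβeq : ∀ i, (μ {ω | (up i)/2 ≤ |X i ω|}).toReal = β i := by
    intro i
    have h1 : μ {ω | (up i)/2 ≤ |X i ω|} = μ (X i ⁻¹' {x : ℝ | (up i)/2 ≤ |x|}) := rfl
    have h2 : (μ {ω | (up i)/2 ≤ |X 1 ω|}) = μ (X 1 ⁻¹' {x : ℝ | (up i)/2 ≤ |x|}) := rfl
    simp only [hβdef, h1, h2, hmap i _ (habs_meas _)]
  have hτ0 : ∀ i, 0 ≤ τ i := fun i => ENNReal.toReal_nonneg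
  have hβ0 : ∀ i, 0 ≤ β i := fun i => ENNReal.toReal_nonneg
  have hβ1 : ∀ i, β i ≤ 1 := fun i => toReal_prob_le_one μ _
  -- β ≤ τ ∘ (·/3)
  have hβτ : ∀ i, 3 ≤ i → β i ≤ τ (i/3) := by
    intro i hi
    have hup3 : up (i/3) ≤ (2/3) * up i := by
      have h1 : ((i/3 : ℕ):ℝ) ≤ (4/9)*(i:ℝ) := by
        have h2 : ((i/3 : ℕ):ℝ) ≤ (i:ℝ)/3 := Nat.cast_div_le
        have h3 : (i:ℝ)/3 ≤ (4/9)*(i:ℝ) := by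
          have : (0:ℝ) ≤ (i:ℝ) := Nat.cast_nonneg i
          linarith
        linarith
      have h4 : up (i/3) ≤ ((4/9)*(i:ℝ))^(1/p) :=
        Real.rpow_le_rpow (Nat.cast_nonneg _) h1 hip.le
      have h5 : ((4/9)*(i:ℝ))^(1/p) = (4/9 : ℝ)^(1/p) * up i :=
        Real.mul_rpow (by norm_num) (Nat.cast_nonneg i)
      have h6 : (4/9 : ℝ)^(1/p) ≤ 2/3 := by
        have e1 : (4/9 : ℝ) = (2/3 : ℝ)^(2:ℕ) := by norm_num
        have e2 : ((2/3 : ℝ)^(2:ℕ))^(1/p) = (2/3 : ℝ)^((2:ℝ)*(1/p)) := by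
          rw [← Real.rpow_natCast (2/3 : ℝ) 2, ← Real.rpow_mul (by norm_num)]
          norm_num
        rw [e1, e2]
        calc (2/3 : ℝ)^((2:ℝ)*(1/p)) ≤ (2/3 : ℝ)^(1:ℝ) := by
              refine Real.rpow_le_rpow_of_exponent_ge (by norm_num) (by norm_num) ?_
              rw [mul_one_div, le_div_iff₀ hp0]
              linarith
          _ = 2/3 := Real.rpow_one _
      have h7 : (4/9 : ℝ)^(1/p) * up i ≤ (2/3) * up i :=
        mul_le_mul_of_nonneg_right h6 (hup_nonneg i)
      linarith
    have hsub : {ω | (up i)/2 ≤ |X 1 ω|} ⊆ {ω | 3*(up (i/3))/4 ≤ |X 1 ω|} := by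
      intro ω hω
      simp only [Set.mem_setOf_eq] at hω ⊢
      nlinarith [hup_nonneg i]
    exact ENNReal.toReal_mono (measure_ne_top μ _) (measure_mono hsub)
  -- PQD positivity of the covariance kernel
  have hHnn : ∀ i j, i ≠ j → ∀ x y, 0 ≤ Hfun μ (X i) (X j) x y := fun i j hij =>
    Hfun_nonneg_of_pqd μ (hX i) (hX j) (hPQD i j hij)
  -- G as iterated integral of Hfun
  have hGH : ∀ k j (u v : ℝ), G k j u v
      = ∫ y in (-v)..v, ∫ x in (-u)..u, Hfun μ (X k) (X j) x y := by
    intro k j u v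
    rw [hG k j u v]
    rfl
  set gpair : ℕ → ℕ → ℝ := fun k j =>
    ((k : ℝ) * j) ^ (-(1 : ℝ) / p) * G k j ((k : ℝ) ^ (1 / p)) ((j : ℝ) ^ (1 / p)) with hgpairdef
  set Fsum : ℕ × ℕ → ℝ := fun kj =>
    if 1 ≤ kj.1 ∧ kj.1 < kj.2 then gpair kj.1 kj.2 else 0 with hFsumdef
  have hsum' : Summable Fsum := hsum
  have hGnn : ∀ k j : ℕ, k ≠ j → ∀ u v : ℝ, 0 ≤ u → 0 ≤ v → 0 ≤ G k j u v := by
    intro k j hkj u v hu hv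
    rw [hGH]
    refine intervalIntegral.integral_nonneg (by linarith) fun y _ => ?_
    exact intervalIntegral.integral_nonneg (by linarith) fun x _ => hHnn k j hkj x y
  have hFnn : ∀ kj, 0 ≤ Fsum kj := by
    intro kj
    rw [hFsumdef]
    dsimp only
    split_ifs with h
    · rcases h with ⟨h1, h2⟩
      refine mul_nonneg (Real.rpow_nonneg ?_ _) (hGnn _ _ (by omega) _ _ ?_ ?_)
      · positivity
      · exact Real.rpow_nonneg (Nat.cast_nonneg _) _
      · exact Real.rpow_nonneg (Nat.cast_nonneg _) _
    · exact le_refl 0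
  set B : ℝ := ∑' kj, Fsum kj with hBdef
  have hB0 : 0 ≤ B := tsum_nonneg hFnn
  have hpartial : ∀ s : Finset (ℕ × ℕ), ∑ kj ∈ s, Fsum kj ≤ B :=
    fun s => hsum'.sum_le_tsum s (fun i _ => hFnn i)
  -- per-pair bound
  have hpair : ∀ i j : ℕ, 1 ≤ i → i < j →
      (μ (A i ∩ A j)).toReal ≤ β i * β j + 16 * gpair i j := by
    intro i j h1i hij
    have hu : 0 < up i := hup_pos i h1i
    have hv : 0 < up j := hup_pos j (by omega)
    have hne : i ≠ j := by omega
    have h := pair_bound μ (hX i) (hX j) hu hv (hHnn i j hne)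
    have hcoef : 16/((up i) * (up j)) * G i j (up i) (up j) = 16 * gpair i j := by
      rw [hgpairdef]
      dsimp only
      simp only [hupdef]
      have hmul : ((i:ℝ) * (j:ℝ))^((1:ℝ)/p) = (i:ℝ)^((1:ℝ)/p) * (j:ℝ)^((1:ℝ)/p) :=
        Real.mul_rpow (Nat.cast_nonneg i) (Nat.cast_nonneg j)
      have hneg : ((i:ℝ) * (j:ℝ))^(-(1:ℝ)/p)
          = ((i:ℝ)^((1:ℝ)/p) * (j:ℝ)^((1:ℝ)/p))⁻¹ := by
        rw [neg_div, Real.rpow_neg (by positivity), hmul]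
      rw [hneg]
      have h1 : (0:ℝ) < (i:ℝ)^((1:ℝ)/p) := Real.rpow_pos_of_pos (by exact_mod_cast h1i) _
      have h2 : (0:ℝ) < (j:ℝ)^((1:ℝ)/p) := Real.rpow_pos_of_pos (by exact_mod_cast (by omega : 0 < j)) _
      field_simp
    calc (μ (A i ∩ A j)).toReal
        = (μ ({ω | 3*(up i)/4 ≤ |X i ω|} ∩ {ω | 3*(up j)/4 ≤ |X j ω|})).toReal := rfl
      _ ≤ (μ {ω | (up i)/2 ≤ |X i ω|}).toReal * (μ {ω | (up j)/2 ≤ |X j ω|}).toReal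
          + 16/((up i) * (up j)) * ∫ y in (-(up j))..(up j), ∫ x in (-(up i))..(up i),
              Hfun μ (X i) (X j) x y := h
      _ = β i * β j + 16 * gpair i j := by
          rw [hβeq i, hβeq j, ← hGH i j (up i) (up j), hcoef]
  -- reduce the goal to summability of τ ∘ succ
  suffices hsummable : Summable (fun i : ℕ => τ (i+1)) by
    refine Summable.of_nonneg_of_le (fun k => ENNReal.toReal_nonneg) (fun k => ?_) hsummable
    refine ENNReal.toReal_mono (measure_ne_top μ _) (measure_mono ?_)
    intro ω hω
    simp only [Set.mem_setOf_eq] at hω ⊢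
    have hcast : ((k:ℝ)+1) = ((k+1 : ℕ):ℝ) := by push_cast; ring
    have hupk : up (k+1) = ((k:ℝ)+1)^(1/p) := by rw [hupdef, hcast]
    rw [hupk]
    have hpos : (0:ℝ) ≤ ((k:ℝ)+1)^(1/p) := Real.rpow_nonneg (by positivity) _
    nlinarith [hω]
  by_contra hns
  -- partial sums of τ tend to infinity
  have hτshift : ∀ n : ℕ, ∑ i ∈ Finset.range n, τ (i+1) = ∑ i ∈ Finset.Ioc 0 n, τ i := by
    intro n
    induction n with
    | zero => simp
    | succ n ih => rw [Finset.sum_range_succ, Finset.sum_Ioc_succ_top (Nat.zero_le n), ih]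
  have hT : Tendsto (fun n => ∑ i ∈ Finset.Ioc 0 n, τ i) atTop atTop := by
    have h0 := (not_summable_iff_tendsto_nat_atTop_of_nonneg (fun i => hτ0 (i+1))).mp hns
    exact h0.congr hτshift
  -- almost surely, eventually not in A n
  have hae : ∀ᵐ ω ∂μ, ∀ᶠ n : ℕ in atTop, ω ∉ A n := by
    filter_upwards [hslln] with ω hω
    have hev := eventually_small hp1 (fun n => X n ω) c hω
    refine hev.mono fun n hn => ?_
    intro hcon
    exact hn hcon
  -- tail unions
  set V : ℕ → Set Ω := fun m => ⋃ i, ⋃ (_ : m < i), A i with hVdef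
  have hVm : ∀ m, MeasurableSet (V m) := fun m =>
    MeasurableSet.iUnion fun i => MeasurableSet.iUnion fun _ => hAm i
  have hVanti : Antitone V := by
    intro a b hab ω hω
    rw [hVdef] at hω ⊢
    rw [Set.mem_iUnion] at hω
    obtain ⟨i, hi⟩ := hω
    rw [Set.mem_iUnion] at hi
    obtain ⟨hbi, hAi⟩ := hi
    rw [Set.mem_iUnion]
    exact ⟨i, by rw [Set.mem_iUnion]; exact ⟨lt_of_le_of_lt hab hbi, hAi⟩⟩
  have hInull : μ (⋂ m, V m) = 0 := by
    rw [measure_eq_zero_iff_ae_notMem]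
    filter_upwards [hae] with ω hω
    intro hcon
    rw [Set.mem_iInter] at hcon
    obtain ⟨m, hm⟩ := eventually_atTop.mp hω
    have h2 := hcon m
    rw [hVdef] at h2
    rw [Set.mem_iUnion] at h2
    obtain ⟨i, hi⟩ := h2
    rw [Set.mem_iUnion] at hi
    obtain ⟨hmi, hAi⟩ := hi
    exact hm i (by omega) hAi
  have hVtend : Tendsto (fun m => μ (V m)) atTop (𝓝 0) := by
    have h0 := tendsto_measure_iInter_atTop (μ := μ)
      (fun m => (hVm m).nullMeasurableSet) hVanti ⟨0, measure_ne_top μ _⟩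
    rw [hInull] at h0
    exact h0
  -- main lower bound
  have hlow : ∀ m : ℕ, 1/9 ≤ (μ (V m)).toReal := by
    intro m
    set K : ℝ := ∑ i ∈ Finset.Ioc 0 m, τ i with hKdef
    set Snn : ℕ → ℝ := fun n => ∑ i ∈ Finset.Ioc m n, τ i with hSnndef
    have hSnn0 : ∀ n, 0 ≤ Snn n := fun n => Finset.sum_nonneg fun i _ => hτ0 i
    have hSn_eq : ∀ n, m ≤ n → Snn n = (∑ i ∈ Finset.Ioc 0 n, τ i) - K := by
      intro n hn
      have h0 := Finset.sum_Ioc_consecutive τ (Nat.zero_le m) hn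
      rw [hSnndef, hKdef]
      dsimp only
      linarith
    have hStend : Tendsto Snn atTop atTop := by
      have h1 : Tendsto (fun n => (∑ i ∈ Finset.Ioc 0 n, τ i) - K) atTop atTop :=
        tendsto_atTop_add_const_right _ (-K) hT
      refine Tendsto.congr' ?_ h1
      filter_upwards [eventually_ge_atTop m] with n hn
      exact (hSn_eq n hn).symm
    have hCE : ∀ n : ℕ, (Snn n)^2 ≤ (μ (V m)).toReal *
        (Snn n + (2 + 3*K + 3*Snn n)^2 + 32*B) := by
      intro n
      have hce := chung_erdos μ (Finset.Ioc m n) A hAm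
      have hS_eq : ∑ i ∈ Finset.Ioc m n, (μ (A i)).toReal = Snn n :=
        Finset.sum_congr rfl fun i _ => hAτ i
      -- union bounded by V m
      have hUV : (μ (⋃ i ∈ Finset.Ioc m n, A i)).toReal ≤ (μ (V m)).toReal := by
        refine ENNReal.toReal_mono (measure_ne_top μ _) (measure_mono ?_)
        intro ω hω
        rw [Set.mem_iUnion₂] at hω
        obtain ⟨i, hi, hωi⟩ := hω
        rw [Finset.mem_Ioc] at hi
        rw [hVdef, Set.mem_iUnion]
        exact ⟨i, by rw [Set.mem_iUnion]; exact ⟨hi.1, hωi⟩⟩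
      -- double sum bound
      have hterm : ∀ i ∈ Finset.Ioc m n, ∀ j ∈ Finset.Ioc m n,
          (μ (A i ∩ A j)).toReal ≤ (if i = j then τ i else 0) + β i * β j
            + (if i < j then 16 * gpair i j else 0) + (if j < i then 16 * gpair j i else 0) := by
        intro i hi j hj
        rw [Finset.mem_Ioc] at hi hj
        rcases lt_trichotomy i j with hlt | heq | hgt
        · rw [if_neg (by omega), if_pos hlt, if_neg (by omega)]
          have := hpair i j (by omega) hlt
          linarith [this]
        · subst heq
          rw [if_pos rfl, if_neg (lt_irrefl i)]
          rw [Set.inter_self, hAτ i]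
          nlinarith [hβ0 i]
        · rw [if_neg (by omega), if_neg (by omega), if_pos hgt]
          rw [Set.inter_comm]
          have := hpair j i (by omega) hgt
          linarith [this]
      have hD : ∑ i ∈ Finset.Ioc m n, ∑ j ∈ Finset.Ioc m n, (μ (A i ∩ A j)).toReal
          ≤ Snn n + (∑ i ∈ Finset.Ioc m n, β i)^2 + 32*B := by
        have hstep : ∑ i ∈ Finset.Ioc m n, ∑ j ∈ Finset.Ioc m n, (μ (A i ∩ A j)).toReal
            ≤ ∑ i ∈ Finset.Ioc m n, ∑ j ∈ Finset.Ioc m n,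
              ((if i = j then τ i else 0) + β i * β j
                + (if i < j then 16 * gpair i j else 0)
                + (if j < i then 16 * gpair j i else 0)) :=
          Finset.sum_le_sum fun i hi => Finset.sum_le_sum fun j hj => hterm i hi j hj
        have hsplit : ∑ i ∈ Finset.Ioc m n, ∑ j ∈ Finset.Ioc m n,
              ((if i = j then τ i else 0) + β i * β j
                + (if i < j then 16 * gpair i j else 0)
                + (if j < i then 16 * gpair j i else 0))
            = (∑ i ∈ Finset.Ioc m n, ∑ j ∈ Finset.Ioc m n, (if i = j then τ i else 0))
              + (∑ i ∈ Finset.Ioc m n, ∑ j ∈ Finset.Ioc m n, β i * β j)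
              + (∑ i ∈ Finset.Ioc m n, ∑ j ∈ Finset.Ioc m n, (if i < j then 16 * gpair i j else 0))
              + (∑ i ∈ Finset.Ioc m n, ∑ j ∈ Finset.Ioc m n, (if j < i then 16 * gpair j i else 0)) := by
          rw [← Finset.sum_add_distrib, ← Finset.sum_add_distrib, ← Finset.sum_add_distrib]
          refine Finset.sum_congr rfl fun i _ => ?_
          rw [← Finset.sum_add_distrib, ← Finset.sum_add_distrib, ← Finset.sum_add_distrib]
        have hdiag : ∑ i ∈ Finset.Ioc m n, ∑ j ∈ Finset.Ioc m n, (if i = j then τ i else 0)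
            = Snn n := by
          rw [hSnndef]
          refine Finset.sum_congr rfl fun i hi => ?_
          rw [show (fun j => if i = j then τ i else 0) = fun j => if j = i then τ i else 0
            from funext fun j => by by_cases h : i = j <;> simp [h, eq_comm]]
          rw [Finset.sum_ite_eq' (Finset.Ioc m n) i (fun _ => τ i), if_pos hi]
        have hββ : ∑ i ∈ Finset.Ioc m n, ∑ j ∈ Finset.Ioc m n, β i * β j
            = (∑ i ∈ Finset.Ioc m n, β i)^2 := by
          rw [pow_two, Finset.sum_mul_sum]
        have hg1 : ∑ i ∈ Finset.Ioc m n, ∑ j ∈ Finset.Ioc m n,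
            (if i < j then 16 * gpair i j else 0) ≤ 16 * B := by
          have he : ∑ i ∈ Finset.Ioc m n, ∑ j ∈ Finset.Ioc m n,
              (if i < j then 16 * gpair i j else 0)
              = ∑ kj ∈ (Finset.Ioc m n) ×ˢ (Finset.Ioc m n),
                (if kj.1 < kj.2 then 16 * gpair kj.1 kj.2 else 0) := by
            rw [Finset.sum_product]
          rw [he]
          have hle : ∑ kj ∈ (Finset.Ioc m n) ×ˢ (Finset.Ioc m n),
              (if kj.1 < kj.2 then 16 * gpair kj.1 kj.2 else 0)
              ≤ ∑ kj ∈ (Finset.Ioc m n) ×ˢ (Finset.Ioc m n), 16 * Fsum kj := by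
            refine Finset.sum_le_sum fun kj hkj => ?_
            rw [Finset.mem_product, Finset.mem_Ioc, Finset.mem_Ioc] at hkj
            by_cases h : kj.1 < kj.2
            · rw [if_pos h, hFsumdef]
              dsimp only
              rw [if_pos ⟨by omega, h⟩]
            · rw [if_neg h]
              exact mul_nonneg (by norm_num) (hFnn kj)
          refine le_trans hle ?_
          rw [← Finset.mul_sum]
          exact mul_le_mul_of_nonneg_left (hpartial _) (by norm_num)
        have hg2 : ∑ i ∈ Finset.Ioc m n, ∑ j ∈ Finset.Ioc m n,
            (if j < i then 16 * gpair j i else 0) ≤ 16 * B := by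
          rw [Finset.sum_comm]
          have he : ∀ j, ∑ i ∈ Finset.Ioc m n, (if j < i then 16 * gpair j i else 0)
              = ∑ i ∈ Finset.Ioc m n, (if j < i then 16 * gpair j i else 0) := fun _ => rfl
          -- this is the same as hg1 with names swapped
          have he2 : ∑ j ∈ Finset.Ioc m n, ∑ i ∈ Finset.Ioc m n,
              (if j < i then 16 * gpair j i else 0)
              = ∑ kj ∈ (Finset.Ioc m n) ×ˢ (Finset.Ioc m n),
                (if kj.1 < kj.2 then 16 * gpair kj.1 kj.2 else 0) := by
            rw [Finset.sum_product]
          rw [he2]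
          have hle : ∑ kj ∈ (Finset.Ioc m n) ×ˢ (Finset.Ioc m n),
              (if kj.1 < kj.2 then 16 * gpair kj.1 kj.2 else 0)
              ≤ ∑ kj ∈ (Finset.Ioc m n) ×ˢ (Finset.Ioc m n), 16 * Fsum kj := by
            refine Finset.sum_le_sum fun kj hkj => ?_
            rw [Finset.mem_product, Finset.mem_Ioc, Finset.mem_Ioc] at hkj
            by_cases h : kj.1 < kj.2
            · rw [if_pos h, hFsumdef]
              dsimp only
              rw [if_pos ⟨by omega, h⟩]
            · rw [if_neg h]
              exact mul_nonneg (by norm_num) (hFnn kj)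
          refine le_trans hle ?_
          rw [← Finset.mul_sum]
          exact mul_le_mul_of_nonneg_left (hpartial _) (by norm_num)
        rw [hsplit, hdiag, hββ] at hstep
        linarith [hstep, hg1, hg2]
      -- β sum bound
      have hβsum : ∑ i ∈ Finset.Ioc m n, β i ≤ 2 + 3*K + 3*Snn n := by
        have h1 : ∑ i ∈ Finset.Ioc m n, β i ≤ ∑ i ∈ Finset.Ioc 0 n, β i := by
          refine Finset.sum_le_sum_of_subset_of_nonneg ?_ fun i _ _ => hβ0 i
          intro i hi
          rw [Finset.mem_Ioc] at hi ⊢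
          omega
        have h2 := beta_tau_sum hτ0 hβ1 hβτ n
        have h3 : ∑ j ∈ Finset.Ioc 0 n, τ j ≤ K + Snn n := by
          rcases le_total n m with hnm | hmn
          · have hsub : ∑ j ∈ Finset.Ioc 0 n, τ j ≤ K := by
              rw [hKdef]
              refine Finset.sum_le_sum_of_subset_of_nonneg ?_ fun i _ _ => hτ0 i
              intro i hi
              rw [Finset.mem_Ioc] at hi ⊢
              omega
            linarith [hSnn0 n]
          · rw [hSn_eq n hmn]
            linarith
        linarith
      -- combine
      have hβsum0 : 0 ≤ ∑ i ∈ Finset.Ioc m n, β i := Finset.sum_nonneg fun i _ => hβ0 i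
      have hsq : (∑ i ∈ Finset.Ioc m n, β i)^2 ≤ (2 + 3*K + 3*Snn n)^2 := by
        have h2K : 0 ≤ K := Finset.sum_nonneg fun i _ => hτ0 i
        nlinarith [hβsum, hβsum0]
      have hDfin : ∑ i ∈ Finset.Ioc m n, ∑ j ∈ Finset.Ioc m n, (μ (A i ∩ A j)).toReal
          ≤ Snn n + (2 + 3*K + 3*Snn n)^2 + 32*B := by linarith [hD, hsq]
      have hD0 : 0 ≤ ∑ i ∈ Finset.Ioc m n, ∑ j ∈ Finset.Ioc m n, (μ (A i ∩ A j)).toReal :=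
        Finset.sum_nonneg fun i _ => Finset.sum_nonneg fun j _ => ENNReal.toReal_nonneg
      have hμ0 : 0 ≤ (μ (⋃ i ∈ Finset.Ioc m n, A i)).toReal := ENNReal.toReal_nonneg
      calc (Snn n)^2 = (∑ i ∈ Finset.Ioc m n, (μ (A i)).toReal)^2 := by rw [hS_eq]
        _ ≤ (μ (⋃ i ∈ Finset.Ioc m n, A i)).toReal
            * ∑ i ∈ Finset.Ioc m n, ∑ j ∈ Finset.Ioc m n, (μ (A i ∩ A j)).toReal := hce
        _ ≤ (μ (V m)).toReal * (Snn n + (2 + 3*K + 3*Snn n)^2 + 32*B) := by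
            refine mul_le_mul hUV hDfin hD0 ENNReal.toReal_nonneg
    -- pass to the limit
    have hq := ratio_tendsto K B hB0
    have hcomp : Tendsto (fun n => (Snn n)^2/(Snn n + (2 + 3*K + 3*Snn n)^2 + 32*B))
        atTop (𝓝 (1/9)) := hq.comp hStend
    refine le_of_tendsto hcomp ?_
    filter_upwards [hStend.eventually_ge_atTop 1] with n hn
    have hden : 0 < Snn n + (2 + 3*K + 3*Snn n)^2 + 32*B := by
      nlinarith [sq_nonneg (2 + 3*K + 3*Snn n), hB0, hn]
    rw [div_le_iff₀ hden]
    exact hCE n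
  -- contradiction
  have hsmall := hVtend.eventually_lt_const
    (show (0:ENNReal) < ENNReal.ofReal (1/9) from ENNReal.ofReal_pos.mpr (by norm_num))
  obtain ⟨m, hm⟩ := hsmall.exists
  have h1 := hlow m
  have h2 : (μ (V m)).toReal < 1/9 := by
    have h3 := (ENNReal.lt_ofReal_iff_toReal_lt (measure_ne_top μ _)).mp hm
    linarith [h3]
  linarith
end

section
/- Let $X_k, X_j$ be random variables identically distributed as $X_1$, $u, v > 0$, $\varepsilon > 1$, and $\Delta_{k,j}(x,y) := \mathbb{P}\{X_k \leq x, X_j \leq y\} - \mathbb{P}\{X_k \leq x\}\mathbb{P}\{X_j \leq y\}$. Then $\mathbb{P}\{X_k \leq -u, X_j \leq -v\} \leq \left(\frac{\varepsilon}{\varepsilon-1}\right)^2 \frac{1}{uv}\int_{-v}^{-v/\varepsilon}\int_{-u}^{-u/\varepsilon} \Delta_{k,j}(x,y)\,dx\,dy + \mathbb{P}\{X_1 \leq -u/\varepsilon\}\,\mathbb{P}\{X_1 \leq -v/\varepsilon\}$. -/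
open MeasureTheory

theorem stmt12 {Ω : Type*} [MeasureSpace Ω] [IsProbabilityMeasure (volume : Measure Ω)]
    (X1 Xk Xj : Ω → ℝ) (hX1 : Measurable X1) (hXk : Measurable Xk) (hXj : Measurable Xj)
    (hk : Measure.map Xk volume = Measure.map X1 volume)
    (hj : Measure.map Xj volume = Measure.map X1 volume)
    (u v : ℝ) (hu : 0 < u) (hv : 0 < v) (ε : ℝ) (hε : 1 < ε) :
    (volume {ω | Xk ω ≤ -u ∧ Xj ω ≤ -v}).toReal ≤
      (ε / (ε - 1)) ^ 2 * (1 / (u * v)) *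
        (∫ y in (-v)..(-v / ε), ∫ x in (-u)..(-u / ε),
          ((volume {ω | Xk ω ≤ x ∧ Xj ω ≤ y}).toReal -
            (volume {ω | Xk ω ≤ x}).toReal * (volume {ω | Xj ω ≤ y}).toReal)) +
      (volume {ω | X1 ω ≤ -u / ε}).toReal * (volume {ω | X1 ω ≤ -v / ε}).toReal := by
  have hε0 : (0:ℝ) < ε := lt_trans one_pos hε
  set μ := (volume : Measure Ω) with hμ
  set f : ℝ → ℝ → ℝ := fun x y => (μ {ω | Xk ω ≤ x ∧ Xj ω ≤ y}).toReal with hfdef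
  set g : ℝ → ℝ := fun x => (μ {ω | Xk ω ≤ x}).toReal with hgdef
  set h : ℝ → ℝ := fun y => (μ {ω | Xj ω ≤ y}).toReal with hhdef
  -- identical distribution facts
  have hgX1 : ∀ x : ℝ, g x = (μ {ω | X1 ω ≤ x}).toReal := by
    intro x
    have : μ (Xk ⁻¹' Set.Iic x) = μ (X1 ⁻¹' Set.Iic x) := by
      rw [← Measure.map_apply hXk measurableSet_Iic, hk,
        Measure.map_apply hX1 measurableSet_Iic]
    simpa [g, Set.preimage, Set.Iic] using congrArg ENNReal.toReal this
  have hhX1 : ∀ y : ℝ, h y = (μ {ω | X1 ω ≤ y}).toReal := by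
    intro y
    have : μ (Xj ⁻¹' Set.Iic y) = μ (X1 ⁻¹' Set.Iic y) := by
      rw [← Measure.map_apply hXj measurableSet_Iic, hj,
        Measure.map_apply hX1 measurableSet_Iic]
    simpa [h, Set.preimage, Set.Iic] using congrArg ENNReal.toReal this
  -- monotonicity
  have hfmono1 : ∀ y : ℝ, Monotone (fun x => f x y) := by
    intro y x1 x2 hx
    exact ENNReal.toReal_mono (measure_ne_top μ _)
      (measure_mono (fun ω hw => ⟨hw.1.trans hx, hw.2⟩))
  have hfmono2 : ∀ x : ℝ, Monotone (fun y => f x y) := by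
    intro x y1 y2 hy
    exact ENNReal.toReal_mono (measure_ne_top μ _)
      (measure_mono (fun ω hw => ⟨hw.1, hw.2.trans hy⟩))
  have hgmono : Monotone g := by
    intro x1 x2 hx
    exact ENNReal.toReal_mono (measure_ne_top μ _)
      (measure_mono (fun ω hw => le_trans hw hx))
  have hhmono : Monotone h := by
    intro y1 y2 hy
    exact ENNReal.toReal_mono (measure_ne_top μ _)
      (measure_mono (fun ω hw => le_trans hw hy))
  have hgnn : ∀ x, 0 ≤ g x := fun x => ENNReal.toReal_nonneg
  have hhnn : ∀ y, 0 ≤ h y := fun y => ENNReal.toReal_nonneg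
  -- interval endpoints
  have hau : -u ≤ -u / ε := by
    rw [neg_div]
    exact neg_le_neg (div_le_self hu.le hε.le)
  have hav : -v ≤ -v / ε := by
    rw [neg_div]
    exact neg_le_neg (div_le_self hv.le hε.le)
  set Wu : ℝ := -u / ε - (-u) with hWu
  set Wv : ℝ := -v / ε - (-v) with hWv
  have hWu0 : 0 ≤ Wu := by simp [Wu]; linarith
  have hWv0 : 0 ≤ Wv := by simp [Wv]; linarith
  -- integrability
  have hfint : ∀ y : ℝ, IntervalIntegrable (fun x => f x y) volume (-u) (-u/ε) :=
    fun y => (hfmono1 y).intervalIntegrable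
  have hgint : IntervalIntegrable g volume (-u) (-u/ε) := hgmono.intervalIntegrable
  have hhint : IntervalIntegrable h volume (-v) (-v/ε) := hhmono.intervalIntegrable
  set I : ℝ → ℝ := fun y => ∫ x in (-u)..(-u/ε), f x y with hIdef
  have hImono : Monotone I := by
    intro y1 y2 hy
    exact intervalIntegral.integral_mono_on hau (hfint y1) (hfint y2)
      (fun x _ => hfmono2 x hy)
  have hIint : IntervalIntegrable I volume (-v) (-v/ε) := hImono.intervalIntegrable
  -- inner integral splits
  have hinner : ∀ y : ℝ,
      (∫ x in (-u)..(-u/ε), (f x y - g x * h y)) = I y - (∫ x in (-u)..(-u/ε), g x) * h y := by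
    intro y
    rw [intervalIntegral.integral_sub (hfint y) (hgint.mul_const (h y)),
      intervalIntegral.integral_mul_const]
  set G : ℝ := ∫ x in (-u)..(-u/ε), g x with hGdef
  have houter : (∫ y in (-v)..(-v/ε), ∫ x in (-u)..(-u/ε), (f x y - g x * h y))
      = (∫ y in (-v)..(-v/ε), I y) - G * (∫ y in (-v)..(-v/ε), h y) := by
    rw [intervalIntegral.integral_congr (fun y _ => hinner y),
      intervalIntegral.integral_sub hIint (hhint.const_mul G),
      intervalIntegral.integral_const_mul]
  set F0 : ℝ := f (-u) (-v) with hF0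
  set Gc : ℝ := g (-u/ε) with hGc
  set Hc : ℝ := h (-v/ε) with hHc
  -- lower bound on ∫ I
  have hIlb : ∀ y ∈ Set.Icc (-v) (-v/ε), Wu * F0 ≤ I y := by
    intro y hy
    calc Wu * F0 = ∫ _x in (-u)..(-u/ε), F0 := by
          rw [intervalIntegral.integral_const, smul_eq_mul]
      _ ≤ I y := intervalIntegral.integral_mono_on hau
          (intervalIntegrable_const) (hfint y)
          (fun x hx => le_trans (hfmono2 (-u) hy.1) (hfmono1 y hx.1))
  have hIlow : Wv * (Wu * F0) ≤ ∫ y in (-v)..(-v/ε), I y := by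
    calc Wv * (Wu * F0) = ∫ _y in (-v)..(-v/ε), (Wu * F0) := by
          rw [intervalIntegral.integral_const, smul_eq_mul]
      _ ≤ _ := intervalIntegral.integral_mono_on hav intervalIntegrable_const hIint hIlb
  -- upper bounds on G, H
  have hGub : G ≤ Wu * Gc := by
    calc G ≤ ∫ _x in (-u)..(-u/ε), Gc :=
          intervalIntegral.integral_mono_on hau hgint intervalIntegrable_const
            (fun x hx => hgmono hx.2)
      _ = Wu * Gc := by rw [intervalIntegral.integral_const, smul_eq_mul]
  have hGnn : 0 ≤ G :=
    intervalIntegral.integral_nonneg hau (fun x _ => hgnn x)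
  have hHub : (∫ y in (-v)..(-v/ε), h y) ≤ Wv * Hc := by
    calc _ ≤ ∫ _y in (-v)..(-v/ε), Hc :=
          intervalIntegral.integral_mono_on hav hhint intervalIntegrable_const
            (fun y hy => hhmono hy.2)
      _ = Wv * Hc := by rw [intervalIntegral.integral_const, smul_eq_mul]
  have hHnn : 0 ≤ (∫ y in (-v)..(-v/ε), h y) :=
    intervalIntegral.integral_nonneg hav (fun y _ => hhnn y)
  have hGcnn : 0 ≤ Gc := hgnn _
  have hHcnn : 0 ≤ Hc := hhnn _
  -- constant
  set c : ℝ := (ε / (ε - 1)) ^ 2 * (1 / (u * v)) with hc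
  have hc1 : c * (Wu * Wv) = 1 := by
    have h1 : ε - 1 ≠ 0 := by linarith
    have h2 : ε ≠ 0 := ne_of_gt hε0
    rw [hc, hWu, hWv]
    field_simp [c, Wu, Wv]
    ring
  have hc0 : 0 ≤ c := by
    apply mul_nonneg (sq_nonneg _)
    positivity
  -- product of upper bounds
  have hGH : G * (∫ y in (-v)..(-v/ε), h y) ≤ (Wu * Gc) * (Wv * Hc) :=
    mul_le_mul hGub hHub hHnn (le_trans hGnn hGub)
  -- put everything together
  have key : F0 ≤ c * ((∫ y in (-v)..(-v/ε), I y) - G * (∫ y in (-v)..(-v/ε), h y))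
      + Gc * Hc := by
    have h1 : c * (Wv * (Wu * F0)) ≤ c * (∫ y in (-v)..(-v/ε), I y) :=
      mul_le_mul_of_nonneg_left hIlow hc0
    have h2 : c * (G * (∫ y in (-v)..(-v/ε), h y)) ≤ c * ((Wu * Gc) * (Wv * Hc)) :=
      mul_le_mul_of_nonneg_left hGH hc0
    have e1 : c * (Wv * (Wu * F0)) = F0 := by
      rw [show c * (Wv * (Wu * F0)) = (c * (Wu * Wv)) * F0 by ring, hc1, one_mul]
    have e2 : c * ((Wu * Gc) * (Wv * Hc)) = Gc * Hc := by
      rw [show c * ((Wu * Gc) * (Wv * Hc)) = (c * (Wu * Wv)) * (Gc * Hc) by ring, hc1, one_mul]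
    have h3 : c * ((∫ y in (-v)..(-v/ε), I y) - G * (∫ y in (-v)..(-v/ε), h y))
        = c * (∫ y in (-v)..(-v/ε), I y) - c * (G * (∫ y in (-v)..(-v/ε), h y)) := by ring
    have h4 : c * (G * (∫ y in (-v)..(-v/ε), h y)) ≤ Gc * Hc := e2 ▸ h2
    clear_value c Wu Wv F0 Gc Hc G I
    linarith [h1, h3, h4, e1]
  have hGoal := key
  rw [houter.symm] at hGoal
  simpa [f, g, h, F0, Gc, Hc, c, hgX1 (-u/ε), hhX1 (-v/ε), neg_div] using hGoal
end
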